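/- arXiv:2602.09808 — 6 statements merged into one kernel-verified Lean document; each statement's English description precedes it below -/
import Mathlib

section
/- Let X be a reflexive Banach space and Φ, ψ : X → (-∞,+∞] with ψ convex, lower semicontinuous, ψ(0) < ∞ and ψ continuous at 0. Define the relaxed slope S⁻(x) = inf{ liminf_n ψ*(-z_n) : z_n ∈ ∂Φ(x_n), x_n → x } for x in the closure of dom Φ. If S⁻(x) < ∞, then there exists z ∈ ∂_ℓ Φ(x) (the limiting subdifferential) with ψ*(-z) ≤ S⁻(x). -/
open NormedSpace Filter Topology

/-- Fenchel conjugate of an `EReal`-valued function on a normed space. -/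
noncomputable def fenchelConj {X : Type*} [NormedAddCommGroup X] [NormedSpace ℝ X]
    (Φ : X → EReal) (z : StrongDual ℝ X) : EReal :=
  ⨆ x : X, ((z x : EReal) - Φ x)

/-- Fréchet (viscosity) subdifferential of `Φ : X → (-∞,+∞]` at `x`. -/
def FrechetSubdiff {X : Type*} [NormedAddCommGroup X] [NormedSpace ℝ X]
    (Φ : X → EReal) (x : X) (z : StrongDual ℝ X) : Prop :=
  Φ x ≠ ⊤ ∧ ∀ ε : ℝ, 0 < ε → ∃ δ > (0 : ℝ), ∀ y : X, ‖y - x‖ < δ →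
    Φ x + ((z (y - x) - ε * ‖y - x‖ : ℝ) : EReal) ≤ Φ y

/-- Limiting subdifferential: weak limits of Fréchet subgradients along strongly convergent
base points. -/
def LimitingSubdiff {X : Type*} [NormedAddCommGroup X] [NormedSpace ℝ X]
    (Φ : X → EReal) (x : X) (z : StrongDual ℝ X) : Prop :=
  ∃ (xs : ℕ → X) (zs : ℕ → StrongDual ℝ X),
    (∀ n, FrechetSubdiff Φ (xs n) (zs n)) ∧
    Tendsto xs atTop (𝓝 x) ∧
    ∀ v : X, Tendsto (fun n => zs n v) atTop (𝓝 (z v))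

/-- The relaxed `ψ*`-slope
`S⁻(x) = inf { liminf_n ψ*(-z_n) : z_n ∈ ∂Φ(x_n), x_n → x }` (with `inf ∅ = +∞`,
which happens exactly when `x` is outside the closure of `dom Φ`). -/
noncomputable def relaxedSlope {X : Type*} [NormedAddCommGroup X] [NormedSpace ℝ X]
    (Φ ψ : X → EReal) (x : X) : EReal :=
  sInf {L : EReal | ∃ (xs : ℕ → X) (zs : ℕ → StrongDual ℝ X),
    (∀ n, FrechetSubdiff Φ (xs n) (zs n)) ∧ Tendsto xs atTop (𝓝 x) ∧
    L = Filter.liminf (fun n => fenchelConj ψ (-(zs n))) atTop}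

/-!
Choose `w_k ∈ ∂Φ(y_k)` with `y_k → x` and `ψ*(-w_k) < u_k`, where `u_k` decreases to `S⁻(x)`. Since
`ψ` is bounded above near `0`, a bound on `ψ*(-w_k)` bounds `‖w_k‖`; in a separable space bounded
sequences of functionals have weak-* convergent subsequences (sequential Banach–Alaoglu), and the
limit `z` is a limiting subgradient with `ψ*(-z) ≤ S⁻(x)` because `ψ*` is a supremum of
weak-* continuous functions.
-/

open Metric

section

variable {X : Type*} [NormedAddCommGroup X] [NormedSpace ℝ X]

theorem fenchelConj_le_liminf_of_forall_tendsto {ι : Type*} {l : Filter ι} [l.NeBot]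
    (ψ : X → EReal) {zs : ι → StrongDual ℝ X} {z : StrongDual ℝ X}
    (hz : ∀ v, Tendsto (fun i => zs i v) l (𝓝 (z v))) :
    fenchelConj ψ z ≤ liminf (fun i => fenchelConj ψ (zs i)) l := by
  refine iSup_le fun v => ?_
  have hsub : Tendsto (fun i => (zs i v : EReal) - ψ v) l (𝓝 ((z v : EReal) - ψ v)) :=
    (EReal.continuousAt_add (p := ((z v : EReal), -ψ v)) (Or.inl (EReal.coe_ne_top _))
      (Or.inl (EReal.coe_ne_bot _))).tendsto.comp
      ((EReal.tendsto_coe.2 (hz v)).prodMk_nhds tendsto_const_nhds)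
  rw [← hsub.liminf_eq]
  exact liminf_le_liminf (Eventually.of_forall fun i =>
    le_iSup (fun v => ((zs i v : EReal) - ψ v)) v)

theorem norm_le_of_fenchelConj_le {ψ : X → EReal} {w : StrongDual ℝ X} {δ C R : ℝ}
    (hδ : 0 < δ) (hψ : ∀ u ∈ closedBall (0 : X) δ, ψ u ≤ C) (hw : fenchelConj ψ w ≤ R) :
    ‖w‖ ≤ (R + C) / δ := by
  have hle : ∀ u ∈ closedBall (0 : X) δ, w u ≤ R + C := fun u hu => by
    have : ((w u - C : ℝ) : EReal) ≤ R :=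
      calc ((w u - C : ℝ) : EReal) = (w u : EReal) - C := EReal.coe_sub _ _
        _ ≤ (w u : EReal) - ψ u := EReal.sub_le_sub le_rfl (hψ u hu)
        _ ≤ fenchelConj ψ w := le_iSup (fun v => ((w v : EReal) - ψ v)) u
        _ ≤ R := hw
    linarith [EReal.coe_le_coe_iff.1 this]
  refine ContinuousLinearMap.opNorm_bound_of_ball_bound hδ _ w fun u hu => ?_
  have hneg : -u ∈ closedBall (0 : X) δ := by simpa using hu
  rw [Real.norm_eq_abs, abs_le]
  constructor <;> linarith [hle u hu, hle (-u) hneg, map_neg w u]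

theorem StrongDual.exists_subseq_tendsto_apply_of_norm_le [TopologicalSpace.SeparableSpace X]
    {w : ℕ → StrongDual ℝ X} {M : ℝ} (hw : ∀ k, ‖w k‖ ≤ M) :
    ∃ (z : StrongDual ℝ X) (φ : ℕ → ℕ), StrictMono φ ∧
      ∀ v, Tendsto (fun j => w (φ j) v) atTop (𝓝 (z v)) := by
  obtain ⟨z, -, φ, hφ, hz⟩ := WeakDual.isSeqCompact_closedBall ℝ X 0 M
    (x := fun k => StrongDual.toWeakDual (w k)) fun k => by simpa using hw k
  exact ⟨WeakDual.toStrongDual z, φ, hφ, fun v => ((WeakDual.eval_continuous v).tendsto z).comp hz⟩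

theorem exists_frechetSubdiff_near_of_relaxedSlope_lt {Φ ψ : X → EReal} {x : X} {r : EReal}
    (h : relaxedSlope Φ ψ x < r) {ε : ℝ} (hε : 0 < ε) :
    ∃ y w, FrechetSubdiff Φ y w ∧ dist y x < ε ∧ fenchelConj ψ (-w) < r := by
  obtain ⟨-, ⟨xs, zs, hsub, hxs, rfl⟩, hlt⟩ := sInf_lt_iff.1 h
  obtain ⟨n, hn_slope, hn_near⟩ :=
    ((frequently_lt_of_liminf_lt (by isBoundedDefault) hlt).and_eventually
      (hxs (ball_mem_nhds x hε))).exists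
  exact ⟨xs n, zs n, hsub n, hn_near, hn_slope⟩

end

theorem exists_limiting_subgradient_attaining_relaxed_slope_general
    {X : Type*} [NormedAddCommGroup X] [NormedSpace ℝ X]
    [TopologicalSpace.SeparableSpace X]
    (Φ ψ : X → EReal)
    (hψ0 : ψ 0 ≠ ⊤) (hψcont : ContinuousAt ψ 0)
    (x : X) (hx : relaxedSlope Φ ψ x < ⊤) :
    ∃ z : StrongDual ℝ X, LimitingSubdiff Φ x z ∧ fenchelConj ψ (-z) ≤ relaxedSlope Φ ψ x := by
  obtain ⟨u, hu_anti, hu_mem, hu_lim⟩ := exists_seq_strictAnti_tendsto' hx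
  choose y w hsub hy hw using fun k : ℕ =>
    exists_frechetSubdiff_near_of_relaxedSlope_lt (hu_mem k).1 (Nat.one_div_pos_of_nat (n := k))
  have hy_lim : Tendsto y atTop (𝓝 x) := tendsto_iff_dist_tendsto_zero.2 <|
    squeeze_zero (fun _ => dist_nonneg) (fun k => (hy k).le) tendsto_one_div_add_atTop_nhds_zero_nat
  obtain ⟨δ, hδ, C, hC⟩ : ∃ δ > 0, ∃ C : ℝ, ∀ v ∈ closedBall (0 : X) δ, ψ v ≤ C := by
    obtain ⟨C, hC0, -⟩ := EReal.lt_iff_exists_real_btwn.1 (lt_top_iff_ne_top.2 hψ0)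
    obtain ⟨δ, hδ, hball⟩ := nhds_basis_closedBall.mem_iff.1 (hψcont (Iio_mem_nhds hC0))
    exact ⟨δ, hδ, C, fun v hv => (hball hv).le⟩
  have hw_bdd : ∀ k, ‖w k‖ ≤ ((u 0).toReal + C) / δ := fun k => by
    simpa using norm_le_of_fenchelConj_le hδ hC <| (hw k).le.trans <|
      (hu_anti.antitone (Nat.zero_le k)).trans (EReal.le_coe_toReal (hu_mem 0).2.ne)
  obtain ⟨z, φ, hφ, hz⟩ := StrongDual.exists_subseq_tendsto_apply_of_norm_le hw_bdd
  refine ⟨z, ⟨y ∘ φ, w ∘ φ, fun j => hsub (φ j), hy_lim.comp hφ.tendsto_atTop, hz⟩, ?_⟩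
  calc fenchelConj ψ (-z) ≤ liminf (fun j => fenchelConj ψ (-w (φ j))) atTop :=
        fenchelConj_le_liminf_of_forall_tendsto ψ fun v => by simpa using (hz v).neg
    _ ≤ liminf (fun j => u (φ j)) atTop :=
        liminf_le_liminf (Eventually.of_forall fun j => (hw (φ j)).le)
    _ = relaxedSlope Φ ψ x := (hu_lim.comp hφ.tendsto_atTop).liminf_eq

/-- In a reflexive separable Banach space, if `ψ` is convex, lsc, finite and continuous at `0`,
and the relaxed slope `S⁻(x)` is finite, then there exists a limiting subgradient
`z ∈ ∂_ℓΦ(x)` with `ψ*(-z) ≤ S⁻(x)`. -/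
theorem exists_limiting_subgradient_attaining_relaxed_slope
    {X : Type*} [NormedAddCommGroup X] [NormedSpace ℝ X] [CompleteSpace X]
    [TopologicalSpace.SeparableSpace X]
    (hrefl : Function.Surjective (NormedSpace.inclusionInDoubleDual ℝ X))
    (Φ ψ : X → EReal) (hψbot : ∀ v, ψ v ≠ ⊥)
    (hψconv : ∀ x y : X, ∀ a b : ℝ, 0 ≤ a → 0 ≤ b → a + b = 1 →
      ψ (a • x + b • y) ≤ (a : EReal) * ψ x + (b : EReal) * ψ y)
    (hψlsc : LowerSemicontinuous ψ)
    (hψ0 : ψ 0 ≠ ⊤) (hψcont : ContinuousAt ψ 0)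
    (x : X) (hx : relaxedSlope Φ ψ x < ⊤) :
    ∃ z : StrongDual ℝ X, LimitingSubdiff Φ x z ∧ fenchelConj ψ (-z) ≤ relaxedSlope Φ ψ x :=
  exists_limiting_subgradient_attaining_relaxed_slope_general Φ ψ hψ0 hψcont x hx
end

section
/- Let X be a reflexive separable Banach space and Φ : X → (-∞,+∞]. Then the graph of the limiting subdifferential, {(x,z) ∈ X × X* : z ∈ ∂_ℓΦ(x)}, is a Borel subset of X × X* with the product of strong topologies. -/
open NormedSpace Filter Topology

/-!
A weak* convergent sequence of functionals on a Banach space is bounded (Banach–Steinhaus), so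
the graph is the countable union over `R` of the limits of sequences from the graph of the
Fréchet subdifferential whose functionals have norm at most `R`. On such bounded sequences,
weak* convergence is convergence on a dense sequence `u`, so these limits are the preimage of a
closure under the strongly continuous map `(x, z) ↦ (x, (z (u m))ₘ)` into the first countable
space `X × (ℕ → ℝ)`, where closures are sequential. Closed sets are Borel.
-/

theorem ContinuousLinearMap.tendsto_apply_of_dense {𝕜 E F ι : Type*}
    [NontriviallyNormedField 𝕜] [SeminormedAddCommGroup E] [NormedSpace 𝕜 E]
    [SeminormedAddCommGroup F] [NormedSpace 𝕜 F] {l : Filter ι} {g : ι → E →L[𝕜] F}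
    {f : E →L[𝕜] F} {R : ℝ} (hg : ∀ i, ‖g i‖ ≤ R) {s : Set E} (hs : Dense s)
    (h : ∀ x ∈ s, Tendsto (fun i => g i x) l (𝓝 (f x))) (x : E) :
    Tendsto (fun i => g i x) l (𝓝 (f x)) := by
  have hequi : Equicontinuous ((↑) ∘ g : ι → E → F) :=
    ((NormedSpace.equicontinuous_TFAE g).out 5 1).mp (⟨R, hg⟩ : ∃ C, ∀ i, ‖g i‖ ≤ C)
  have hclosed := hequi.isClosed_setOfPred_tendsto (l := l) f.continuous
  exact hclosed.closure_subset_iff.mpr h (hs x)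

section StrongWeakStarSeqClosure

variable {𝕜 X : Type*} [NontriviallyNormedField 𝕜] [NormedAddCommGroup X] [NormedSpace 𝕜 X]

def strongWeakStarSeqClosure (G : Set (X × StrongDual 𝕜 X)) : Set (X × StrongDual 𝕜 X) :=
  {p | ∃ q : ℕ → X × StrongDual 𝕜 X, (∀ n, q n ∈ G) ∧
    Tendsto (fun n => (q n).1) atTop (𝓝 p.1) ∧
      ∀ v, Tendsto (fun n => (q n).2 v) atTop (𝓝 (p.2 v))}

theorem strongWeakStarSeqClosure_mono {G H : Set (X × StrongDual 𝕜 X)} (hGH : G ⊆ H) :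
    strongWeakStarSeqClosure G ⊆ strongWeakStarSeqClosure H :=
  fun _ ⟨q, hqG, hq⟩ => ⟨q, fun n => hGH (hqG n), hq⟩

theorem strongWeakStarSeqClosure_eq_iUnion_bounded [CompleteSpace X]
    (G : Set (X × StrongDual 𝕜 X)) :
    strongWeakStarSeqClosure G =
      ⋃ R : ℕ, strongWeakStarSeqClosure {q ∈ G | ‖q.2‖ ≤ R} := by
  refine subset_antisymm (fun p ⟨q, hqG, hq₁, hq₂⟩ => ?_)
    (Set.iUnion_subset fun R => strongWeakStarSeqClosure_mono fun q hq => hq.1)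
  obtain ⟨C, hC⟩ : ∃ C, ∀ n, ‖(q n).2‖ ≤ C :=
    banach_steinhaus fun v =>
      let ⟨C, hC⟩ := (hq₂ v).norm.bddAbove_range
      ⟨C, fun n => hC ⟨n, rfl⟩⟩
  exact Set.mem_iUnion.mpr
    ⟨⌈C⌉₊, q, fun n => ⟨hqG n, (hC n).trans (Nat.le_ceil C)⟩, hq₁, hq₂⟩

def prodEvalSeq (u : ℕ → X) (p : X × StrongDual 𝕜 X) : X × (ℕ → 𝕜) :=
  (p.1, fun m => p.2 (u m))

theorem continuous_prodEvalSeq (u : ℕ → X) : Continuous (prodEvalSeq (𝕜 := 𝕜) u) :=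
  continuous_fst.prodMk <| continuous_pi fun m =>
    (ContinuousLinearMap.apply 𝕜 𝕜 (u m)).continuous.comp continuous_snd

theorem tendsto_prodEvalSeq_iff {ι : Type*} {l : Filter ι} {u : ℕ → X}
    {q : ι → X × StrongDual 𝕜 X} {p : X × StrongDual 𝕜 X} :
    Tendsto (fun i => prodEvalSeq u (q i)) l (𝓝 (prodEvalSeq u p)) ↔
      Tendsto (fun i => (q i).1) l (𝓝 p.1) ∧
        ∀ m, Tendsto (fun i => (q i).2 (u m)) l (𝓝 (p.2 (u m))) := by
  rw [nhds_prod_eq, tendsto_prod_iff', tendsto_pi_nhds]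
  rfl

theorem strongWeakStarSeqClosure_eq_preimage_closure {G : Set (X × StrongDual 𝕜 X)} {R : ℝ}
    (hG : ∀ q ∈ G, ‖q.2‖ ≤ R) {u : ℕ → X} (hu : DenseRange u) :
    strongWeakStarSeqClosure G = prodEvalSeq u ⁻¹' closure (prodEvalSeq u '' G) := by
  ext p
  rw [Set.mem_preimage, mem_closure_iff_seq_limit]
  constructor
  · rintro ⟨q, hqG, hq₁, hq₂⟩
    exact ⟨fun n => prodEvalSeq u (q n), fun n => Set.mem_image_of_mem _ (hqG n),
      tendsto_prodEvalSeq_iff.mpr ⟨hq₁, fun m => hq₂ (u m)⟩⟩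
  · rintro ⟨y, hyG, hy⟩
    choose q hqG hqy using hyG
    obtain rfl : y = fun n => prodEvalSeq u (q n) := funext fun n => (hqy n).symm
    obtain ⟨hq₁, hq₂⟩ := tendsto_prodEvalSeq_iff.mp hy
    refine ⟨q, hqG, hq₁, ContinuousLinearMap.tendsto_apply_of_dense (fun n => hG _ (hqG n))
      hu ?_⟩
    rintro _ ⟨m, rfl⟩
    exact hq₂ m

theorem isClosed_strongWeakStarSeqClosure_of_bounded [TopologicalSpace.SeparableSpace X]
    {G : Set (X × StrongDual 𝕜 X)} {R : ℝ} (hG : ∀ q ∈ G, ‖q.2‖ ≤ R) :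
    IsClosed (strongWeakStarSeqClosure G) := by
  obtain ⟨u, hu⟩ := TopologicalSpace.exists_dense_seq X
  rw [strongWeakStarSeqClosure_eq_preimage_closure hG hu]
  exact isClosed_closure.preimage (continuous_prodEvalSeq u)

theorem measurableSet_strongWeakStarSeqClosure [CompleteSpace X]
    [TopologicalSpace.SeparableSpace X] [MeasurableSpace (X × StrongDual 𝕜 X)]
    [OpensMeasurableSpace (X × StrongDual 𝕜 X)] (G : Set (X × StrongDual 𝕜 X)) :
    MeasurableSet (strongWeakStarSeqClosure G) := by
  rw [strongWeakStarSeqClosure_eq_iUnion_bounded]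
  exact MeasurableSet.iUnion fun R =>
    (isClosed_strongWeakStarSeqClosure_of_bounded fun q hq => hq.2).measurableSet

end StrongWeakStarSeqClosure

theorem setOf_limitingSubdiff_eq {X : Type*} [NormedAddCommGroup X] [NormedSpace ℝ X]
    (Φ : X → EReal) :
    {p : X × StrongDual ℝ X | LimitingSubdiff Φ p.1 p.2} =
      strongWeakStarSeqClosure {p | FrechetSubdiff Φ p.1 p.2} := by
  ext p
  constructor
  · rintro ⟨xs, zs, hF, hx, hz⟩
    exact ⟨fun n => (xs n, zs n), hF, hx, hz⟩
  · rintro ⟨q, hF, hx, hz⟩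
    exact ⟨fun n => (q n).1, fun n => (q n).2, hF, hx, hz⟩

theorem limitingSubdiff_graph_borel_general
    {X : Type*} [NormedAddCommGroup X] [NormedSpace ℝ X] [CompleteSpace X]
    [TopologicalSpace.SeparableSpace X]
    (Φ : X → EReal) :
    @MeasurableSet (X × StrongDual ℝ X) (borel (X × StrongDual ℝ X))
      {p : X × StrongDual ℝ X | LimitingSubdiff Φ p.1 p.2} := by
  let _ : MeasurableSpace (X × StrongDual ℝ X) := borel _
  have : BorelSpace (X × StrongDual ℝ X) := ⟨rfl⟩
  rw [setOf_limitingSubdiff_eq]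
  exact measurableSet_strongWeakStarSeqClosure _

/-- In a reflexive separable Banach space, the graph of the limiting subdifferential of any
`Φ : X → (-∞,+∞]` is a Borel subset of `X × X*` for the product of the strong topologies. -/
theorem limitingSubdiff_graph_borel
    {X : Type*} [NormedAddCommGroup X] [NormedSpace ℝ X] [CompleteSpace X]
    [TopologicalSpace.SeparableSpace X]
    (hrefl : Function.Surjective (NormedSpace.inclusionInDoubleDual ℝ X))
    (Φ : X → EReal) (hbot : ∀ x, Φ x ≠ ⊥) :
    @MeasurableSet (X × StrongDual ℝ X) (borel (X × StrongDual ℝ X))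
      {p : X × StrongDual ℝ X | LimitingSubdiff Φ p.1 p.2} :=
  limitingSubdiff_graph_borel_general Φ
end

section
/- Let X be a separable reflexive Banach space, D a countable subset of the unit ball of X* with dense span, and ‖x‖_ω̄ = (Σ_n ⟨z_n,x⟩²/n²)^{1/2}. Then the original norm x ↦ ‖x‖ is lower semicontinuous with respect to the topology induced by ‖·‖_ω̄. -/
/-!
Since `|⟨z_k, x⟩| ≤ (k + 1) ‖x‖_ω̄`, convergence `x_n → x` in `‖·‖_ω̄` gives `⟨g, x_n⟩ → ⟨g, x⟩`
for every `g` in the span of the `z_k`, and for such `g` therefore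
`|⟨g, x⟩| ≤ ‖g‖ · liminf ‖x_n‖`. This bound defines a closed set of functionals, so by density
it holds for all of `X*`, and Hahn–Banach turns it into `‖x‖ ≤ liminf ‖x_n‖`.
-/

open NormedSpace Filter Topology
open scoped ENNReal

/-- The weak auxiliary norm `‖x‖_ω̄ = (Σ_n ⟨z_n,x⟩²/n²)^{1/2}` associated with a countable
family `z` in the unit ball of `X*`. -/
noncomputable def omegaNorm {X : Type*} [NormedAddCommGroup X] [NormedSpace ℝ X]
    (z : ℕ → StrongDual ℝ X) (x : X) : ℝ :=
  Real.sqrt (∑' n : ℕ, (z n x) ^ 2 / ((n : ℝ) + 1) ^ 2)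

section DualBound

variable {E : Type*} [NormedAddCommGroup E] [NormedSpace ℝ E]

theorem tendsto_apply_of_mem_span {S : Set (StrongDual ℝ E)} {x : E} {xs : ℕ → E}
    (h : ∀ g ∈ S, Tendsto (fun n => g (xs n)) atTop (𝓝 (g x)))
    {g : StrongDual ℝ E} (hg : g ∈ Submodule.span ℝ S) :
    Tendsto (fun n => g (xs n)) atTop (𝓝 (g x)) := by
  induction hg using Submodule.span_induction with
  | mem g hg => exact h g hg
  | zero => exact tendsto_const_nhds
  | add g h _ _ hg hh => exact hg.add hh
  | smul a g _ hg => exact hg.const_mul a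

theorem enorm_apply_le_mul_liminf_of_tendsto (g : StrongDual ℝ E) {x : E} {xs : ℕ → E}
    (h : Tendsto (fun n => g (xs n)) atTop (𝓝 (g x))) :
    ‖g x‖ₑ ≤ ‖g‖ₑ * liminf (fun n => ‖xs n‖ₑ) atTop :=
  calc ‖g x‖ₑ = liminf (fun n => ‖g (xs n)‖ₑ) atTop := h.enorm.liminf_eq.symm
    _ ≤ liminf (fun n => ‖g‖ₑ * ‖xs n‖ₑ) atTop :=
      liminf_le_liminf (Eventually.of_forall fun n => g.le_opENorm (xs n))
    _ = ‖g‖ₑ * liminf (fun n => ‖xs n‖ₑ) atTop :=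
      ENNReal.liminf_const_mul_of_ne_top enorm_ne_top

theorem norm_le_of_dense_dual_bound {S : Set (StrongDual ℝ E)} (hS : Dense S) (x : E) {M : ℝ}
    (hM₀ : 0 ≤ M) (hM : ∀ g ∈ S, ‖g x‖ ≤ M * ‖g‖) : ‖x‖ ≤ M := by
  have hclosed : IsClosed {g : StrongDual ℝ E | ‖g x‖ ≤ M * ‖g‖} :=
    isClosed_le (ContinuousLinearMap.apply ℝ ℝ x).continuous.norm
      (continuous_const.mul continuous_norm)
  exact norm_le_dual_bound ℝ x hM₀ fun g => closure_minimal hM hclosed (hS g)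

theorem enorm_le_liminf_of_dense_of_tendsto {S : Set (StrongDual ℝ E)} (hS : Dense S)
    {x : E} {xs : ℕ → E} (h : ∀ g ∈ S, Tendsto (fun n => g (xs n)) atTop (𝓝 (g x))) :
    ‖x‖ₑ ≤ liminf (fun n => ‖xs n‖ₑ) atTop := by
  set L := liminf (fun n => ‖xs n‖ₑ) atTop
  rcases eq_or_ne L ⊤ with hL | hL
  · exact hL ▸ le_top
  rw [← ofReal_norm, ENNReal.ofReal_le_iff_le_toReal hL]
  refine norm_le_of_dense_dual_bound hS x ENNReal.toReal_nonneg fun g hg => ?_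
  have hbound := ENNReal.toReal_mono (ENNReal.mul_ne_top enorm_ne_top hL)
    (enorm_apply_le_mul_liminf_of_tendsto g (h g hg))
  rwa [ENNReal.toReal_mul, toReal_enorm, toReal_enorm, mul_comm] at hbound

end DualBound

section OmegaNorm

variable {X : Type*} [NormedAddCommGroup X] [NormedSpace ℝ X] {z : ℕ → StrongDual ℝ X}

theorem summable_omegaNorm_terms {C : ℝ} (hz : ∀ n, ‖z n‖ ≤ C) (x : X) :
    Summable fun n : ℕ => (z n x) ^ 2 / ((n : ℝ) + 1) ^ 2 := by
  have hterm (n : ℕ) :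
      (z n x) ^ 2 / ((n : ℝ) + 1) ^ 2 ≤ (C * ‖x‖) ^ 2 * (1 / ((n : ℝ) + 1) ^ 2) := by
    have hcoord : ‖z n x‖ ≤ C * ‖x‖ := (z n).le_opNorm x |>.trans (by gcongr; exact hz n)
    rw [mul_one_div]
    gcongr ?_ / _
    exact sq_le_sq.2 (hcoord.trans (le_abs_self _))
  have hinv : Summable fun n : ℕ => 1 / ((n : ℝ) + 1) ^ 2 := by
    simpa using (summable_nat_add_iff 1).2 (Real.summable_one_div_nat_pow.2 one_lt_two)
  exact (hinv.mul_left _).of_nonneg_of_le (fun n => by positivity) hterm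

theorem abs_apply_le_mul_omegaNorm {C : ℝ} (hz : ∀ n, ‖z n‖ ≤ C) (x : X) (k : ℕ) :
    |z k x| ≤ ((k : ℝ) + 1) * omegaNorm z x := by
  have hk : (z k x) ^ 2 / ((k : ℝ) + 1) ^ 2 ≤ ∑' n : ℕ, (z n x) ^ 2 / ((n : ℝ) + 1) ^ 2 :=
    (summable_omegaNorm_terms hz x).le_tsum k fun n _ => by positivity
  rw [div_le_iff₀ (by positivity), mul_comm] at hk
  calc |z k x|
      ≤ Real.sqrt (((k : ℝ) + 1) ^ 2 * ∑' n : ℕ, (z n x) ^ 2 / ((n : ℝ) + 1) ^ 2) :=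
        Real.abs_le_sqrt hk
    _ = ((k : ℝ) + 1) * omegaNorm z x := by
      rw [Real.sqrt_mul (by positivity), Real.sqrt_sq (by positivity), omegaNorm]

theorem tendsto_apply_of_tendsto_omegaNorm {C : ℝ} (hz : ∀ n, ‖z n‖ ≤ C)
    {x : X} {xs : ℕ → X}
    (h : Tendsto (fun n => omegaNorm z (xs n - x)) atTop (𝓝 0)) (k : ℕ) :
    Tendsto (fun n => z k (xs n)) atTop (𝓝 (z k x)) := by
  rw [tendsto_iff_norm_sub_tendsto_zero]
  refine squeeze_zero (fun n => norm_nonneg _) (fun n => ?_)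
    (by simpa using h.const_mul ((k : ℝ) + 1))
  rw [← map_sub, Real.norm_eq_abs]
  exact abs_apply_le_mul_omegaNorm hz (xs n - x) k

end OmegaNorm

theorem norm_lowerSemicontinuous_omegaNorm_general
    {X : Type*} [NormedAddCommGroup X] [NormedSpace ℝ X]
    (z : ℕ → StrongDual ℝ X) (hz : ∀ n, ‖z n‖ ≤ 1)
    (hdense : Dense (↑(Submodule.span ℝ (Set.range z)) : Set (StrongDual ℝ X))) :
    ∀ (x : X) (xs : ℕ → X),
      Tendsto (fun n => omegaNorm z (xs n - x)) atTop (𝓝 0) →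
      (‖x‖₊ : ℝ≥0∞) ≤ Filter.liminf (fun n => (‖xs n‖₊ : ℝ≥0∞)) atTop := by
  intro x xs h
  have hz_tendsto : ∀ g ∈ Set.range z, Tendsto (fun n => g (xs n)) atTop (𝓝 (g x)) := by
    rintro _ ⟨k, rfl⟩
    exact tendsto_apply_of_tendsto_omegaNorm hz h k
  exact enorm_le_liminf_of_dense_of_tendsto hdense
    fun g hg => tendsto_apply_of_mem_span hz_tendsto hg

/-- In a separable reflexive Banach space, the original norm is (sequentially) lower
semicontinuous with respect to the topology induced by `‖·‖_ω̄`. -/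
theorem norm_lowerSemicontinuous_omegaNorm
    {X : Type*} [NormedAddCommGroup X] [NormedSpace ℝ X] [CompleteSpace X]
    [TopologicalSpace.SeparableSpace X]
    (hrefl : Function.Surjective (NormedSpace.inclusionInDoubleDual ℝ X))
    (z : ℕ → StrongDual ℝ X) (hz : ∀ n, ‖z n‖ ≤ 1)
    (hdense : Dense (↑(Submodule.span ℝ (Set.range z)) : Set (StrongDual ℝ X))) :
    ∀ (x : X) (xs : ℕ → X),
      Tendsto (fun n => omegaNorm z (xs n - x)) atTop (𝓝 0) →
      (‖x‖₊ : ℝ≥0∞) ≤ Filter.liminf (fun n => (‖xs n‖₊ : ℝ≥0∞)) atTop :=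
  norm_lowerSemicontinuous_omegaNorm_general z hz hdense
end

section
/- Under the same assumptions on Ψ (proper convex lsc in v, bounded below by a superlinear G, sup_y Ψ(y,0) < ∞, Ψ* jointly upper semicontinuous), for every bounded continuous ζ : Y → X* and every μ ∈ 𝓜₊(Y) one has ∫_Y Ψ*(y, ζ(y)) dμ(y) = sup{ ∫_Y (⟨ζ(y), v(y)⟩ - Ψ(y, v(y))) dμ(y) : v ∈ L¹_μ(Y;X) }. -/
open MeasureTheory NormedSpace Filter Topology
open scoped ENNReal NNReal

/-- The nonnegative part of an extended real, in `[0,∞]`. -/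
noncomputable def erealToENNReal (x : EReal) : ℝ≥0∞ :=
  if x = ⊤ then ⊤ else ENNReal.ofReal x.toReal

/-- Integral of an `EReal`-valued function, defined as the difference of the lower integrals of
the positive and negative parts. -/
noncomputable def eint {Y : Type*} [MeasurableSpace Y] (μ : Measure Y) (f : Y → EReal) :
    EReal :=
  ((∫⁻ y, erealToENNReal (f y) ∂μ : ℝ≥0∞) : EReal) -
    ((∫⁻ y, erealToENNReal (-(f y)) ∂μ : ℝ≥0∞) : EReal)

/-- The partial Fenchel conjugate of `Ψ` in its second variable:
`Ψ*(y,z) = sup_v (⟨z,v⟩ - Ψ(y,v))`. -/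
noncomputable def partialConj {Y : Type*} {X : Type*} [NormedAddCommGroup X] [NormedSpace ℝ X]
    (Ψ : Y × X → EReal) (p : Y × StrongDual ℝ X) : EReal :=
  ⨆ v : X, ((p.2 v : EReal) - Ψ (p.1, v))

/-!
The inequality `≥` is Fenchel–Young, pointwise. For `≤`, fix a level `c`. By Fenchel–Moreau,
`c ≤ ⟨ζ y, v⟩ - Ψ (y, v)` holds iff `⟨z, v⟩ - ⟨ζ y, v⟩ + c ≤ Ψ* (y, z)` for every `z ∈ X*`, and
superlinearity confines the `v` with `c < ⟨ζ y, v⟩ - Ψ (y, v)` to a ball of some radius `R`.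
View this ball inside `X** = X` with the weak-* topology: it is compact (Banach–Alaoglu) and
metrizable (`X*` is separable), and since `Ψ*` is upper semicontinuous the conditions above cut out
a closed subset of `Y × ball`. A closed set with compact metrizable fibres has a Borel selection:
pull it back to the Cantor set and take the least point of each fibre. This gives a measurable
`v_c` for every level, and gluing the `v_c` along a grid of levels of width `ε` yields a bounded
measurable `v` with `Ψ* (y, ζ y) - ε ≤ ⟨ζ y, v y⟩ - Ψ (y, v y)` for all `y`.
-/

open Set TopologicalSpace Metric

namespace EReal

lemma coe_le_coe_sub_iff {a c : ℝ} {b : EReal} :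
    (c : EReal) ≤ a - b ↔ b ≤ ((a - c : ℝ) : EReal) := by
  induction b with
  | bot => simp
  | top => simp [-EReal.coe_sub]
  | coe b => norm_cast; constructor <;> intro h <;> linarith

lemma coe_sub_le_coe_iff {a c : ℝ} {b : EReal} :
    (a : EReal) - b ≤ c ↔ ((a - c : ℝ) : EReal) ≤ b := by
  induction b with
  | bot => simp [-EReal.coe_sub]
  | top => simp
  | coe b => norm_cast; constructor <;> intro h <;> linarith

end EReal

lemma coe_le_of_forall_eq_coe {α : Type*} {f : α → EReal} (hbot : ∀ v, f v ≠ ⊥) {g : α → ℝ}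
    (h : ∀ v (t : ℝ), f v = t → g v ≤ t) (v : α) : (g v : EReal) ≤ f v := by
  induction hfv : f v with
  | bot => exact absurd hfv (hbot v)
  | top => exact le_top
  | coe t => exact_mod_cast h v t hfv

lemma exists_measurable_coe_eq {Y : Type*} [MeasurableSpace Y] {f : Y → EReal}
    (hf : Measurable f) {a b : ℝ} (ha : ∀ y, (a : EReal) ≤ f y) (hb : ∀ y, f y ≤ b) :
    ∃ φ : Y → ℝ, Measurable φ ∧ (∀ y, a ≤ φ y ∧ φ y ≤ b) ∧ ∀ y, (φ y : EReal) = f y := by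
  have hcoe : ∀ y, ((f y).toReal : EReal) = f y := fun y =>
    EReal.coe_toReal (ne_top_of_le_ne_top (EReal.coe_ne_top b) (hb y))
      (ne_bot_of_le_ne_bot (EReal.coe_ne_bot a) (ha y))
  refine ⟨fun y => (f y).toReal, measurable_ereal_toReal.comp hf, fun y => ?_, hcoe⟩
  have h₁ := ha y
  have h₂ := hb y
  rw [← hcoe y] at h₁ h₂
  exact ⟨by exact_mod_cast h₁, by exact_mod_cast h₂⟩

lemma LowerSemicontinuous.isClosed_setOf_le_coe {α : Type*} [TopologicalSpace α] {f : α → EReal}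
    (hf : LowerSemicontinuous f) : IsClosed {p : α × ℝ | f p.1 ≤ p.2} :=
  (lowerSemicontinuous_iff_isClosed_epigraph.1 hf).preimage
    (continuous_fst.prodMk (continuous_coe_real_ereal.comp continuous_snd))

lemma isClosed_setOf_le_of_upperSemicontinuous {α γ : Type*} [TopologicalSpace α] [LinearOrder γ]
    [TopologicalSpace γ] [OrderTopology γ] [DenselyOrdered γ] {f g : α → γ} (hf : Continuous f)
    (hg : UpperSemicontinuous g) : IsClosed {p | f p ≤ g p} := by
  refine isOpen_compl_iff.1 (isOpen_iff_mem_nhds.2 fun p hp => ?_)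
  obtain ⟨b, hgb, hbf⟩ := exists_between (not_le.1 hp)
  filter_upwards [hg p b hgb, hf.continuousAt (Ioi_mem_nhds hbf)] with q hq hq'
  exact not_le.2 (hq.trans hq')

section Integral

variable {Y : Type*} [MeasurableSpace Y] {μ : Measure Y}

lemma erealToENNReal_mono : Monotone erealToENNReal := by
  intro x y hxy
  unfold erealToENNReal
  split_ifs with hx hy hy
  · exact le_rfl
  · exact absurd (top_le_iff.mp (hx ▸ hxy)) hy
  · exact le_top
  · rcases eq_or_ne x ⊥ with rfl | hx'
    · simp
    · exact ENNReal.ofReal_le_ofReal (EReal.toReal_le_toReal hxy hx' hy)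

lemma erealToENNReal_coe (a : ℝ) : erealToENNReal (a : EReal) = ENNReal.ofReal a := by
  simp [erealToENNReal]

lemma eint_mono {f g : Y → EReal} (h : ∀ y, f y ≤ g y) : eint μ f ≤ eint μ g :=
  EReal.sub_le_sub (by exact_mod_cast lintegral_mono fun y => erealToENNReal_mono (h y))
    (by exact_mod_cast lintegral_mono fun y => erealToENNReal_mono (EReal.neg_le_neg_iff.2 (h y)))

lemma eint_coe_eq_integral {f : Y → ℝ} (hf : Integrable f μ) :
    eint μ (fun y => (f y : EReal)) = ((∫ y, f y ∂μ : ℝ) : EReal) := by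
  have hneg : ∫⁻ y, ENNReal.ofReal (-f y) ∂μ ≠ ⊤ := hf.neg.lintegral_lt_top.ne
  simp only [eint, ← EReal.coe_neg, erealToENNReal_coe]
  rw [integral_eq_lintegral_pos_part_sub_lintegral_neg_part hf, EReal.coe_sub,
    EReal.coe_ennreal_toReal hf.lintegral_lt_top.ne, EReal.coe_ennreal_toReal hneg]

lemma eint_coe_le_of_forall_sub_le [IsFiniteMeasure μ] {φ : Y → ℝ} (hφ : Integrable φ μ)
    {S : EReal} (h : ∀ ε > 0, eint μ (fun y => ((φ y - ε : ℝ) : EReal)) ≤ S) :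
    eint μ (fun y => (φ y : EReal)) ≤ S := by
  rw [eint_coe_eq_integral hφ]
  refine EReal.ge_of_forall_gt_iff_ge.1 fun r hr => ?_
  have hr' : r < ∫ y, φ y ∂μ := by exact_mod_cast hr
  set m := μ.real univ
  have hm : 0 ≤ m := measureReal_nonneg
  set ε := (∫ y, φ y ∂μ - r) / (m + 1)
  have hε : 0 < ε := div_pos (by linarith) (by positivity)
  have hmε : m * ε ≤ ∫ y, φ y ∂μ - r := by
    rw [← div_mul_cancel₀ (∫ y, φ y ∂μ - r) (by positivity : m + 1 ≠ 0)]
    nlinarith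
  refine le_trans ?_ (h ε hε)
  rw [eint_coe_eq_integral (f := fun y => φ y - ε) (hφ.sub (integrable_const ε)),
    integral_sub hφ (integrable_const ε), integral_const, smul_eq_mul]
  exact_mod_cast (by linarith : r ≤ ∫ y, φ y ∂μ - m * ε)

end Integral

section Conjugate

variable {Y X : Type*} [NormedAddCommGroup X] [NormedSpace ℝ X] {Ψ : Y × X → EReal}

lemma apply_sub_le_partialConj (y : Y) (z : StrongDual ℝ X) (v : X) :
    (z v : EReal) - Ψ (y, v) ≤ partialConj Ψ (y, z) :=
  le_iSup (fun w => ((z w : EReal) - Ψ (y, w))) v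

lemma partialConj_le_coe_iff {y : Y} {z : StrongDual ℝ X} {q : ℝ} :
    partialConj Ψ (y, z) ≤ q ↔ ∀ v, ((z v - q : ℝ) : EReal) ≤ Ψ (y, v) :=
  iSup_le_iff.trans (forall_congr' fun _ => EReal.coe_sub_le_coe_iff)

lemma partialConj_le_of_mul_norm_sub_le {y : Y} {z : StrongDual ℝ X} {M q : ℝ} (hz : ‖z‖ ≤ M)
    (h : ∀ v, ((M * ‖v‖ - q : ℝ) : EReal) ≤ Ψ (y, v)) : partialConj Ψ (y, z) ≤ q := by
  refine partialConj_le_coe_iff.2 fun v => le_trans ?_ (h v)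
  have := (le_abs_self (z v)).trans (z.le_of_opNorm_le hz v)
  exact_mod_cast (by linarith : z v - q ≤ M * ‖v‖ - q)

lemma neg_le_partialConj {y : Y} (z : StrongDual ℝ X) {K : ℝ} (hK : Ψ (y, 0) ≤ K) :
    ((-K : ℝ) : EReal) ≤ partialConj Ψ (y, z) :=
  (EReal.coe_le_coe_sub_iff.2 (by simpa using hK)).trans (apply_sub_le_partialConj y z 0)

end Conjugate

lemma norm_le_of_lt_apply_sub {X : Type*} [NormedAddCommGroup X] [NormedSpace ℝ X]
    {z : StrongDual ℝ X} {v : X} {b : EReal} {M q c : ℝ} (hz : ‖z‖ ≤ M)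
    (hb : (((M + 1) * ‖v‖ - q : ℝ) : EReal) ≤ b) (hc : (c : EReal) < z v - b) :
    ‖v‖ ≤ q - c := by
  have h := hb.trans (EReal.coe_le_coe_sub_iff.1 hc.le)
  norm_cast at h
  linarith [(le_abs_self (z v)).trans (z.le_of_opNorm_le hz v)]

section AffineMinorant

variable {X : Type*} [NormedAddCommGroup X] [NormedSpace ℝ X] {f : X → EReal}

lemma convex_setOf_le_coe
    (hconv : ∀ (v w : X) (a b : ℝ), 0 ≤ a → 0 ≤ b → a + b = 1 →
      f (a • v + b • w) ≤ (a : EReal) * f v + (b : EReal) * f w) :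
    Convex ℝ {p : X × ℝ | f p.1 ≤ p.2} := by
  rintro ⟨v, s⟩ (hv : f v ≤ s) ⟨w, t⟩ (hw : f w ≤ t) a b ha hb hab
  calc f (a • v + b • w) ≤ (a : EReal) * f v + (b : EReal) * f w := hconv v w a b ha hb hab
    _ ≤ (a : EReal) * s + (b : EReal) * t := by gcongr
    _ = ((a * s + b * t : ℝ) : EReal) := by norm_cast

lemma exists_affine_le_of_separated (hbot : ∀ v, f v ≠ ⊥) (hproper : ∃ v, f v ≠ ⊤) {c₀ : ℝ}
    (hc₀ : ∀ v, (c₀ : EReal) ≤ f v) {z : StrongDual ℝ X} {a u r : ℝ} {x : X}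
    (hsep : ∀ v (t : ℝ), f v ≤ t → z v + t * a < u) (hx : u < z x + r * a) :
    ∃ (z' : StrongDual ℝ X) (q : ℝ), (∀ v, ((z' v - q : ℝ) : EReal) ≤ f v) ∧ r < z' x - q := by
  obtain ⟨v₁, hv₁⟩ := hproper
  have ha : a ≤ 0 := by
    by_contra! ha
    have h₁ := hsep v₁ (max (f v₁).toReal ((u - z v₁) / a))
      ((EReal.le_coe_toReal hv₁).trans (by exact_mod_cast le_max_left _ _))
    have h₂ := (div_le_iff₀ ha).1 (le_max_right (f v₁).toReal ((u - z v₁) / a))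
    linarith
  rcases ha.lt_or_eq with ha | rfl
  · refine ⟨(-a)⁻¹ • z, u / -a, coe_le_of_forall_eq_coe hbot fun v t hvt => ?_, ?_⟩
    · have := hsep v t hvt.le
      rw [smul_apply, smul_eq_mul, inv_mul_eq_div, ← sub_div, div_le_iff₀ (neg_pos.2 ha)]
      linarith
    · rw [smul_apply, smul_eq_mul, inv_mul_eq_div, ← sub_div, lt_div_iff₀ (neg_pos.2 ha)]
      linarith
  -- a vertical separating hyperplane: tilt the constant minorant `c₀` along it
  · have hzx : 0 < z x - u := by linarith
    obtain ⟨n, hn⟩ := exists_nat_gt ((r - c₀) / (z x - u))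
    refine ⟨(n : ℝ) • z, n * u - c₀, coe_le_of_forall_eq_coe hbot fun v t hvt => ?_, ?_⟩
    · have h₁ := hsep v t hvt.le
      have h₂ : c₀ ≤ t := by exact_mod_cast hvt ▸ hc₀ v
      have h₃ : (n : ℝ) * z v ≤ n * u := by gcongr; linarith
      simp only [smul_apply, smul_eq_mul]
      linarith
    · have := (div_lt_iff₀ hzx).1 hn
      simp only [smul_apply, smul_eq_mul]
      linarith

lemma exists_affine_le_of_lt (hbot : ∀ v, f v ≠ ⊥) (hproper : ∃ v, f v ≠ ⊤)
    (hconv : ∀ (v w : X) (a b : ℝ), 0 ≤ a → 0 ≤ b → a + b = 1 →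
      f (a • v + b • w) ≤ (a : EReal) * f v + (b : EReal) * f w)
    (hlsc : LowerSemicontinuous f) {c₀ : ℝ} (hc₀ : ∀ v, (c₀ : EReal) ≤ f v) {x : X} {r : ℝ}
    (hr : (r : EReal) < f x) :
    ∃ (z : StrongDual ℝ X) (q : ℝ), (∀ v, ((z v - q : ℝ) : EReal) ≤ f v) ∧ r < z x - q := by
  obtain ⟨L, u, hL, hLx⟩ := geometric_hahn_banach_closed_point (convex_setOf_le_coe hconv)
    hlsc.isClosed_setOf_le_coe (x := (x, r)) (not_le.2 hr)
  have hsplit : ∀ p : X × ℝ, L p = L.comp (.inl ℝ X ℝ) p.1 + p.2 * L (0, 1) := by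
    rintro ⟨v, t⟩
    conv_lhs => rw [show ((v, t) : X × ℝ) = (v, 0) + t • (0, 1) by simp, map_add, map_smul]
    rfl
  exact exists_affine_le_of_separated hbot hproper hc₀
    (fun v t h => hsplit (v, t) ▸ hL (v, t) h) (hsplit (x, r) ▸ hLx)

end AffineMinorant

lemma le_of_forall_sub_le_partialConj {Y X : Type*} [NormedAddCommGroup X] [NormedSpace ℝ X]
    {Ψ : Y × X → EReal} {y : Y} (hbot : ∀ v, Ψ (y, v) ≠ ⊥) (hproper : ∃ v, Ψ (y, v) ≠ ⊤)
    (hconv : ∀ (v w : X) (a b : ℝ), 0 ≤ a → 0 ≤ b → a + b = 1 →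
      Ψ (y, a • v + b • w) ≤ (a : EReal) * Ψ (y, v) + (b : EReal) * Ψ (y, w))
    (hlsc : LowerSemicontinuous fun v => Ψ (y, v)) {c₀ : ℝ} (hc₀ : ∀ v, (c₀ : EReal) ≤ Ψ (y, v))
    {v : X} {s : ℝ} (h : ∀ z : StrongDual ℝ X, ((z v - s : ℝ) : EReal) ≤ partialConj Ψ (y, z)) :
    Ψ (y, v) ≤ s := by
  by_contra! hs
  obtain ⟨z, q, hzq, hlt⟩ := exists_affine_le_of_lt hbot hproper hconv hlsc hc₀ hs
  have := (h z).trans (partialConj_le_coe_iff.2 hzq)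
  norm_cast at this
  linarith

lemma Submodule.exists_strongDual_eq_zero_ne_zero {E : Type*} [NormedAddCommGroup E]
    [NormedSpace ℝ E] {N : Submodule ℝ E} (hN : IsClosed (N : Set E)) {e : E} (he : e ∉ N) :
    ∃ g : StrongDual ℝ E, (∀ x ∈ N, g x = 0) ∧ g e ≠ 0 := by
  obtain ⟨g, u, hg, hge⟩ := geometric_hahn_banach_closed_point N.convex hN he
  have hu : 0 < u := by simpa using hg 0 N.zero_mem
  refine ⟨g, fun x hx => ?_, by linarith⟩
  by_contra hgx
  have := hg (((u + 1) / g x) • x) (N.smul_mem _ hx)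
  rw [map_smul, smul_eq_mul, div_mul_cancel₀ _ hgx] at this
  linarith

lemma separableSpace_of_separableSpace_strongDual {E : Type*} [NormedAddCommGroup E]
    [NormedSpace ℝ E] [SeparableSpace (StrongDual ℝ E)] : SeparableSpace E := by
  obtain ⟨g, hg⟩ := exists_dense_seq (StrongDual ℝ E)
  have hnorming : ∀ k, ∃ x : E, ‖x‖ ≤ 1 ∧ ‖g k‖ / 2 ≤ ‖g k x‖ := fun k => by
    rcases eq_or_ne (g k) 0 with h | h
    · exact ⟨0, by simp [h]⟩
    · obtain ⟨x, hx, hgx⟩ := (g k).exists_lt_apply_of_lt_opNorm (half_lt_self (norm_pos_iff.2 h))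
      exact ⟨x, hx.le, hgx.le⟩
  choose x hx₁ hx₂ using hnorming
  set S := Submodule.span ℝ (range x)
  set N := S.topologicalClosure
  suffices (N : Set E) = univ from
    isSeparable_univ_iff.1 (this ▸ (countable_range x).isSeparable.span.closure)
  by_contra hN
  obtain ⟨e, he⟩ := (ne_univ_iff_exists_notMem _).1 hN
  obtain ⟨f, hfN, hfe⟩ := N.exists_strongDual_eq_zero_ne_zero S.isClosed_topologicalClosure he
  -- `f` kills every `x k`, which norms `g k`; so `f` is far from every `g k`
  have hfar : ∀ k, ‖f‖ ≤ 3 * ‖f - g k‖ := fun k => by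
    have hfx : f (x k) = 0 :=
      hfN _ (S.le_topologicalClosure (Submodule.subset_span (mem_range_self k)))
    have : ‖g k (x k)‖ ≤ ‖f - g k‖ := by
      calc ‖g k (x k)‖ = ‖(f - g k) (x k)‖ := by simp [hfx]
        _ ≤ ‖f - g k‖ * ‖x k‖ := (f - g k).le_opNorm _
        _ ≤ ‖f - g k‖ := mul_le_of_le_one_right (norm_nonneg _) (hx₁ k)
    linarith [hx₂ k, norm_le_norm_add_norm_sub' f (g k), norm_sub_rev f (g k)]
  have hf0 : f = 0 := by
    by_contra hf
    have hpos := norm_pos_iff.2 hf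
    obtain ⟨k, hk⟩ := denseRange_iff.1 hg f (‖f‖ / 3) (by positivity)
    linarith [hfar k, dist_eq_norm f (g k)]
  exact hfe (by simp [hf0])

lemma separableSpace_strongDual_of_surjective {X : Type*} [NormedAddCommGroup X]
    [NormedSpace ℝ X] [SeparableSpace X] (hrefl : Function.Surjective (inclusionInDoubleDual ℝ X)) :
    SeparableSpace (StrongDual ℝ X) :=
  have := hrefl.denseRange.separableSpace (inclusionInDoubleDual ℝ X).continuous
  separableSpace_of_separableSpace_strongDual

abbrev weakDualBall (E : Type*) [NormedAddCommGroup E] [NormedSpace ℝ E] (R : ℝ) :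
    Set (WeakDual ℝ E) :=
  WeakDual.toStrongDual ⁻¹' closedBall 0 R

lemma continuousOn_weakDualBall_apply {E : Type*} [NormedAddCommGroup E] [NormedSpace ℝ E]
    (R : ℝ) : ContinuousOn (fun q : WeakDual ℝ E × E => q.1 q.2) (weakDualBall E R ×ˢ univ) := by
  rintro ⟨φ₀, x₀⟩ -
  have h₁ : Tendsto (fun q : WeakDual ℝ E × E => q.1 x₀) (𝓝 (φ₀, x₀)) (𝓝 (φ₀ x₀)) :=
    ((WeakDual.eval_continuous x₀).comp continuous_fst).tendsto _
  have h₂ : Tendsto (fun q : WeakDual ℝ E × E => q.1 (q.2 - x₀))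
      (𝓝[weakDualBall E R ×ˢ univ] (φ₀, x₀)) (𝓝 0) := by
    have hR : Tendsto (fun q : WeakDual ℝ E × E => R * ‖q.2 - x₀‖) (𝓝 (φ₀, x₀)) (𝓝 0) := by
      have := (((continuous_snd (X := WeakDual ℝ E) (Y := E)).sub
        (continuous_const (y := x₀))).norm.const_mul R).tendsto (φ₀, x₀)
      simpa using this
    refine squeeze_zero_norm' ?_ (hR.mono_left nhdsWithin_le_nhds)
    filter_upwards [self_mem_nhdsWithin] with q hq
    exact ((WeakDual.toStrongDual q.1).le_opNorm _).trans
      (mul_le_mul_of_nonneg_right (mem_closedBall_zero_iff.1 hq.1) (norm_nonneg _))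
  have := (h₁.mono_left nhdsWithin_le_nhds).add h₂
  simp only [map_sub, add_sub_cancel, add_zero] at this
  exact this

lemma exists_measurable_inverse_inclusionInDoubleDual {X : Type*} [NormedAddCommGroup X]
    [NormedSpace ℝ X] [CompleteSpace X] [SeparableSpace X] [MeasurableSpace X] [BorelSpace X]
    (hrefl : Function.Surjective (inclusionInDoubleDual ℝ X)) (R : ℝ)
    [MeasurableSpace (weakDualBall (StrongDual ℝ X) R)]
    [BorelSpace (weakDualBall (StrongDual ℝ X) R)] :
    ∃ L : weakDualBall (StrongDual ℝ X) R → X, Measurable L ∧ ∀ φ, ‖L φ‖ ≤ R ∧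
      inclusionInDoubleDual ℝ X (L φ) = WeakDual.toStrongDual (φ : WeakDual ℝ _) := by
  have : PolishSpace (closedBall (0 : X) R) := isClosed_closedBall.polishSpace
  let ι : closedBall (0 : X) R → weakDualBall (StrongDual ℝ X) R := fun v =>
    ⟨StrongDual.toWeakDual (inclusionInDoubleDual ℝ X v),
      by simpa using (double_dual_bound ℝ X v).trans (mem_closedBall_zero_iff.1 v.2)⟩
  have hι : MeasurableEmbedding ι := by
    refine Continuous.measurableEmbedding ?_ fun v w h => ?_
    · exact (WeakDual.continuous_of_continuous_eval fun z =>
        z.continuous.comp continuous_subtype_val).subtype_mk _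
    · exact Subtype.ext ((inclusionInDoubleDualLi ℝ).injective
        (StrongDual.toWeakDual.injective (congrArg Subtype.val h)))
  have hsurj : Function.Surjective ι := fun φ => by
    obtain ⟨v, hv⟩ := hrefl (WeakDual.toStrongDual (φ : WeakDual ℝ _))
    have hvR : ‖v‖ ≤ R := by
      have := mem_closedBall_zero_iff.1 φ.2
      rwa [← hv, show ‖inclusionInDoubleDual ℝ X v‖ = ‖v‖ from
        (inclusionInDoubleDualLi ℝ).norm_map v] at this
    exact ⟨⟨v, mem_closedBall_zero_iff.2 hvR⟩, Subtype.ext (by simp [ι, hv])⟩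
  obtain ⟨L, hL, hLι⟩ := hι.exists_measurable_extend measurable_subtype_coe fun _ => ⟨0⟩
  refine ⟨L, hL, fun φ => ?_⟩
  obtain ⟨v, rfl⟩ := hsurj φ
  rw [show L (ι v) = v from congrFun hLι v]
  exact ⟨mem_closedBall_zero_iff.1 v.2, rfl⟩

lemma exists_measurable_selection_of_isCompact_real {Y : Type*} [TopologicalSpace Y]
    [MeasurableSpace Y] [OpensMeasurableSpace Y] {K : Set ℝ} (hK : IsCompact K) [Nonempty K]
    {W : Set (Y × K)} (hW : IsClosed W) :
    ∃ σ : Y → K, Measurable σ ∧ ∀ y t, (y, t) ∈ W → (y, σ y) ∈ W := by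
  classical
  have : CompactSpace K := isCompact_iff_compactSpace.1 hK
  set P := Prod.fst '' W
  have hleast : ∀ y ∈ P, ∃ t, IsLeast {t : K | (y, t) ∈ W} t := by
    rintro _ ⟨⟨y, t⟩, ht, rfl⟩
    exact (hW.preimage (Continuous.prodMk_right y)).isCompact.exists_isLeast ⟨t, ht⟩
  choose! σ hσ using hleast
  -- off `P` the selection is a constant, so that its sublevel sets stay measurable
  set k₀ := Classical.arbitrary K
  set σ' := P.piecewise σ fun _ => k₀
  have hsub : ∀ a : ℝ, (fun y => (σ' y : ℝ)) ⁻¹' Iic a =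
      Prod.fst '' (W ∩ {p | (p.2 : ℝ) ≤ a}) ∪ (Pᶜ ∩ {_y | (k₀ : ℝ) ≤ a}) := by
    intro a
    ext y
    by_cases hy : y ∈ P
    · simp only [σ', mem_preimage, piecewise_eq_of_mem _ _ _ hy, mem_Iic, mem_union,
        mem_inter_iff, mem_compl_iff, hy, not_true_eq_false, false_and, or_false]
      refine ⟨fun h => ⟨(y, σ y), ⟨(hσ y hy).1, h⟩, rfl⟩, ?_⟩
      rintro ⟨⟨_, t⟩, ⟨ht, hta⟩, rfl⟩
      exact le_trans (Subtype.mono_coe _ ((hσ _ hy).2 ht)) hta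
    · have : y ∉ Prod.fst '' (W ∩ {p | (p.2 : ℝ) ≤ a}) :=
        fun h => hy (image_mono inter_subset_left h)
      simp [σ', hy, this]
  have hmeas : Measurable fun y => (σ' y : ℝ) := measurable_of_Iic fun a => by
    rw [hsub a]
    refine (isClosedMap_fst_of_compactSpace _ (hW.inter ?_)).measurableSet.union
      ((isClosedMap_fst_of_compactSpace _ hW).measurableSet.compl.inter (MeasurableSet.const _))
    exact isClosed_le (continuous_subtype_val.comp continuous_snd) continuous_const
  refine ⟨σ', hmeas.subtype_mk, fun y t hyt => ?_⟩
  have hy : y ∈ P := ⟨(y, t), hyt, rfl⟩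
  simpa [σ', piecewise_eq_of_mem _ _ _ hy] using (hσ y hy).1

lemma exists_measurable_selection_of_isClosed {Y H : Type*} [TopologicalSpace Y]
    [MeasurableSpace Y] [OpensMeasurableSpace Y] [TopologicalSpace H] [CompactSpace H]
    [MetrizableSpace H] [Nonempty H] [MeasurableSpace H] [BorelSpace H] {W : Set (Y × H)}
    (hW : IsClosed W) : ∃ σ : Y → H, Measurable σ ∧ ∀ y h, (y, h) ∈ W → (y, σ y) ∈ W := by
  let := metrizableSpaceMetric H
  obtain ⟨f, hf, hfs⟩ := exists_nat_bool_continuous_surjective_of_compact H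
  have : Nonempty cantorSet := ⟨⟨0, zero_mem_cantorSet⟩⟩
  set π : cantorSet → H := f ∘ cantorSetHomeomorphNatToBool
  have hπ : Continuous π := hf.comp cantorSetHomeomorphNatToBool.continuous
  obtain ⟨σ, hσm, hσ⟩ := exists_measurable_selection_of_isCompact_real isCompact_cantorSet
    (hW.preimage (continuous_fst.prodMk (hπ.comp continuous_snd)) :
      IsClosed {p : Y × cantorSet | (p.1, π p.2) ∈ W})
  refine ⟨π ∘ σ, hπ.measurable.comp hσm, fun y h hyh => ?_⟩
  obtain ⟨c, rfl⟩ := hfs h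
  exact hσ y (cantorSetHomeomorphNatToBool.symm c) (by simpa [π] using hyh)

lemma isClosed_setOf_forall_le_partialConj {Y X : Type*} [TopologicalSpace Y]
    [NormedAddCommGroup X] [NormedSpace ℝ X] {Ψ : Y × X → EReal}
    (husc : UpperSemicontinuous (partialConj Ψ)) {ζ : Y → StrongDual ℝ X} (hζ : Continuous ζ)
    (c R : ℝ) :
    IsClosed {p : Y × weakDualBall (StrongDual ℝ X) R | ∀ z : StrongDual ℝ X,
      (((p.2 : WeakDual ℝ _) z - (p.2 : WeakDual ℝ _) (ζ p.1) + c : ℝ) : EReal) ≤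
        partialConj Ψ (p.1, z)} := by
  simp only [ofPred_forall]
  refine isClosed_iInter fun z => isClosed_setOf_le_of_upperSemicontinuous ?_
    (husc.comp (continuous_fst.prodMk continuous_const))
  have hval : Continuous fun p : Y × weakDualBall (StrongDual ℝ X) R =>
      (p.2 : WeakDual ℝ (StrongDual ℝ X)) :=
    continuous_subtype_val.comp continuous_snd
  refine continuous_coe_real_ereal.comp
    ((((WeakDual.eval_continuous z).comp hval).sub ?_).add continuous_const)
  exact (continuousOn_weakDualBall_apply R).comp_continuous (hval.prodMk (hζ.comp continuous_fst))
    fun p => ⟨p.2.2, mem_univ _⟩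

lemma exists_measurable_le_apply_sub_of_lt_partialConj {Y : Type*} [TopologicalSpace Y]
    [MeasurableSpace Y] [OpensMeasurableSpace Y] {X : Type*} [NormedAddCommGroup X]
    [NormedSpace ℝ X] [CompleteSpace X] [SeparableSpace X] [MeasurableSpace X] [BorelSpace X]
    (hrefl : Function.Surjective (inclusionInDoubleDual ℝ X)) {Ψ : Y × X → EReal}
    (hbiconj : ∀ y v (s : ℝ),
      (∀ z : StrongDual ℝ X, ((z v - s : ℝ) : EReal) ≤ partialConj Ψ (y, z)) → Ψ (y, v) ≤ s)
    (husc : UpperSemicontinuous (partialConj Ψ)) {ζ : Y → StrongDual ℝ X} (hζ : Continuous ζ)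
    {c R : ℝ} (hR0 : 0 ≤ R) (hR : ∀ y v, (c : EReal) < ζ y v - Ψ (y, v) → ‖v‖ ≤ R) :
    ∃ v : Y → X, Measurable v ∧ (∀ y, ‖v y‖ ≤ R) ∧
      ∀ y, (c : EReal) < partialConj Ψ (y, ζ y) → (c : EReal) ≤ ζ y (v y) - Ψ (y, v y) := by
  have := separableSpace_strongDual_of_surjective hrefl
  set B := weakDualBall (StrongDual ℝ X) R
  have hB : IsCompact B := WeakDual.isCompact_closedBall 0 R
  have : CompactSpace B := isCompact_iff_compactSpace.1 hB
  have : MetrizableSpace B := WeakDual.metrizable_of_isCompact ℝ _ B hB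
  have : Nonempty B := ⟨⟨0, mem_closedBall_zero_iff.2 (by simpa using hR0)⟩⟩
  let : MeasurableSpace B := borel B
  have : BorelSpace B := ⟨rfl⟩
  obtain ⟨σ, hσm, hσ⟩ :=
    exists_measurable_selection_of_isClosed (isClosed_setOf_forall_le_partialConj husc hζ c R)
  obtain ⟨L, hLm, hL⟩ := exists_measurable_inverse_inclusionInDoubleDual hrefl R
  refine ⟨L ∘ σ, hLm.comp hσm, fun y => (hL _).1, fun y hy => ?_⟩
  obtain ⟨v, hv⟩ := lt_iSup_iff.1 hy
  have hΨv : Ψ (y, v) ≤ ((ζ y v - c : ℝ) : EReal) := EReal.coe_le_coe_sub_iff.1 hv.le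
  have hvB : StrongDual.toWeakDual (inclusionInDoubleDual ℝ X v) ∈ B :=
    mem_closedBall_zero_iff.2 (by simpa using (double_dual_bound ℝ X v).trans (hR y v hv))
  have hσy := hσ y ⟨_, hvB⟩ fun z => by
    refine le_trans ?_ (apply_sub_le_partialConj y z v)
    simpa [← EReal.coe_sub, sub_add] using EReal.sub_le_sub (le_refl (z v : EReal)) hΨv
  have hσL : ∀ w, (σ y : WeakDual ℝ (StrongDual ℝ X)) w = w (L (σ y)) := fun w =>
    (congrArg (fun φ : StrongDual ℝ (StrongDual ℝ X) => φ w) (hL (σ y)).2).symm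
  refine EReal.coe_le_coe_sub_iff.2 (hbiconj y _ _ fun z => ?_)
  simpa [hσL, sub_add] using hσy z

lemma exists_measurable_sub_le_of_forall_level {Y X : Type*} [MeasurableSpace Y]
    [MeasurableSpace X] (F : Y → X → EReal) {φ : Y → ℝ} (hφ : Measurable φ) {S : Set X}
    {c₀ ε : ℝ} (hε : 0 < ε) (hφc₀ : ∀ y, c₀ < φ y)
    (hlevel : ∀ c, c₀ ≤ c → ∃ v : Y → X, Measurable v ∧ (∀ y, v y ∈ S) ∧
      ∀ y, c < φ y → (c : EReal) ≤ F y (v y)) :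
    ∃ v : Y → X, Measurable v ∧ (∀ y, v y ∈ S) ∧ ∀ y, ((φ y - ε : ℝ) : EReal) ≤ F y (v y) := by
  choose w hwm hwS hw using fun i : ℕ =>
    hlevel (c₀ + i * ε) (le_add_of_nonneg_right (by positivity))
  -- `n y` indexes the highest level `c₀ + n ε` strictly below `φ y`
  set n : Y → ℕ := fun y => ⌈(φ y - c₀) / ε⌉₊ - 1
  have hn : ∀ y, c₀ + n y * ε < φ y ∧ φ y - ε ≤ c₀ + n y * ε := by
    intro y
    have hpos : 0 < (φ y - c₀) / ε := div_pos (sub_pos.2 (hφc₀ y)) hε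
    have hcast : (n y : ℝ) = ⌈(φ y - c₀) / ε⌉₊ - 1 := by
      rw [Nat.cast_sub (Nat.one_le_iff_ne_zero.2 (Nat.ceil_pos.2 hpos).ne'), Nat.cast_one]
    have h₁ := Nat.ceil_lt_add_one hpos.le
    have h₂ := Nat.le_ceil ((φ y - c₀) / ε)
    rw [hcast]
    constructor
    · have : (⌈(φ y - c₀) / ε⌉₊ - 1 : ℝ) * ε < (φ y - c₀) / ε * ε := by gcongr; linarith
      rw [div_mul_cancel₀ _ hε.ne'] at this
      linarith
    · have : (φ y - c₀) / ε * ε ≤ ⌈(φ y - c₀) / ε⌉₊ * ε := by gcongr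
      rw [div_mul_cancel₀ _ hε.ne'] at this
      linarith
  have hnm : Measurable n :=
    (measurable_from_nat (f := fun k : ℕ => k - 1)).comp ((hφ.sub_const c₀).div_const ε).nat_ceil
  refine ⟨fun y => w (n y) y, ?_, fun y => hwS _ y, fun y => ?_⟩
  · exact (measurable_from_prod_countable_left (f := fun p : Y × ℕ => w p.2 p.1)
      fun i => hwm i).comp (measurable_id.prodMk hnm)
  · exact le_trans (by exact_mod_cast (hn y).2) (hw (n y) y (hn y).1)

theorem integral_partialConj_dual_formula_general
    {Y : Type*} [TopologicalSpace Y] [MeasurableSpace Y] [BorelSpace Y]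
    {X : Type*} [NormedAddCommGroup X] [NormedSpace ℝ X] [CompleteSpace X]
    [TopologicalSpace.SeparableSpace X]
    (hrefl : Function.Surjective (NormedSpace.inclusionInDoubleDual ℝ X))
    (Ψ : Y × X → EReal) (hbot : ∀ p, Ψ p ≠ ⊥)
    (hproper : ∀ y : Y, ∃ v : X, Ψ (y, v) ≠ ⊤)
    (hconv : ∀ (y : Y) (v w : X) (a b : ℝ), 0 ≤ a → 0 ≤ b → a + b = 1 →
      Ψ (y, a • v + b • w) ≤ (a : EReal) * Ψ (y, v) + (b : EReal) * Ψ (y, w))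
    (hlsc : ∀ y : Y, LowerSemicontinuous fun v : X => Ψ (y, v))
    (G : X → EReal)
    (hGbd : ∃ c : ℝ, ∀ v : X, (c : EReal) ≤ G v)
    (hGsuper : ∀ M : ℝ, ∃ c : ℝ, ∀ v : X, ((M * ‖v‖ - c : ℝ) : EReal) ≤ G v)
    (hGle : ∀ (y : Y) (v : X), G v ≤ Ψ (y, v))
    (hzero : ∃ K : ℝ, ∀ y : Y, Ψ (y, 0) ≤ (K : EReal))
    (husc : UpperSemicontinuous (partialConj Ψ))
    (ζ : Y → StrongDual ℝ X) (hζcont : Continuous ζ) (hζbdd : ∃ M : ℝ, ∀ y, ‖ζ y‖ ≤ M)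
    (μ : Measure Y) (hμ : IsFiniteMeasure μ) :
    eint μ (fun y => partialConj Ψ (y, ζ y)) =
      ⨆ (v : Y → X) (_ : Integrable v μ),
        eint μ (fun y => ((ζ y (v y) : ℝ) : EReal) - Ψ (y, v y)) := by
  let : MeasurableSpace X := borel X
  have : BorelSpace X := ⟨rfl⟩
  obtain ⟨K, hK⟩ := hzero
  obtain ⟨c₀, hc₀⟩ := hGbd
  obtain ⟨M, hM⟩ := hζbdd
  obtain ⟨cU, hcU⟩ := hGsuper M
  obtain ⟨cR, hcR⟩ := hGsuper (M + 1)
  obtain ⟨φ, hφm, hφb, hφ⟩ := exists_measurable_coe_eq (f := fun y => partialConj Ψ (y, ζ y))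
    (husc.comp (continuous_id.prodMk hζcont)).measurable (fun y => neg_le_partialConj (ζ y) (hK y))
    fun y => partialConj_le_of_mul_norm_sub_le (hM y) fun v => (hcU v).trans (hGle y v)
  have hφint : Integrable φ μ := Integrable.of_bound hφm.aestronglyMeasurable _
    (ae_of_all _ fun y => abs_le_max_abs_abs (hφb y).1 (hφb y).2)
  have hbiconj : ∀ y v (s : ℝ), (∀ z : StrongDual ℝ X, ((z v - s : ℝ) : EReal) ≤
      partialConj Ψ (y, z)) → Ψ (y, v) ≤ s := fun y v s =>
    le_of_forall_sub_le_partialConj (fun v => hbot (y, v)) (hproper y) (hconv y) (hlsc y)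
      fun v => (hc₀ v).trans (hGle y v)
  have hlevel : ∀ c, -K - 1 ≤ c → ∃ v : Y → X, Measurable v ∧
      (∀ y, v y ∈ closedBall 0 (max (cR + K + 1) 0)) ∧
      ∀ y, c < φ y → (c : EReal) ≤ ((ζ y (v y) : ℝ) : EReal) - Ψ (y, v y) := fun c hc => by
    obtain ⟨v, hvm, hvR, hv⟩ := exists_measurable_le_apply_sub_of_lt_partialConj (c := c)
      (R := max (cR + K + 1) 0) hrefl hbiconj husc hζcont (le_max_right _ _) fun y v h =>
        (norm_le_of_lt_apply_sub (hM y) ((hcR v).trans (hGle y v)) h).trans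
          (le_max_of_le_left (by linarith))
    exact ⟨v, hvm, fun y => mem_closedBall_zero_iff.2 (hvR y),
      fun y hy => hv y (hφ y ▸ by exact_mod_cast hy)⟩
  simp only [← hφ]
  refine le_antisymm (eint_coe_le_of_forall_sub_le hφint fun ε hε => ?_)
    (iSup₂_le fun v _ => eint_mono fun y => hφ y ▸ apply_sub_le_partialConj y (ζ y) (v y))
  obtain ⟨v, hvm, hvR, hv⟩ := exists_measurable_sub_le_of_forall_level
    (fun y x => ((ζ y x : ℝ) : EReal) - Ψ (y, x)) hφm hε (fun y => by linarith [(hφb y).1]) hlevel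
  exact le_iSup₂_of_le v (Integrable.of_bound hvm.aestronglyMeasurable _
    (ae_of_all _ fun y => mem_closedBall_zero_iff.1 (hvR y))) (eint_mono hv)

/-- Dual formula for the integral of `Ψ*`: for every bounded continuous `ζ : Y → X*` and every
finite measure `μ`,
`∫ Ψ*(y, ζ(y)) dμ = sup { ∫ (⟨ζ(y), v(y)⟩ - Ψ(y, v(y))) dμ : v ∈ L¹_μ(Y;X) }`. -/
theorem integral_partialConj_dual_formula
    {Y : Type*} [TopologicalSpace Y] [PolishSpace Y] [MeasurableSpace Y] [BorelSpace Y]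
    {X : Type*} [NormedAddCommGroup X] [NormedSpace ℝ X] [CompleteSpace X]
    [TopologicalSpace.SeparableSpace X]
    (hrefl : Function.Surjective (NormedSpace.inclusionInDoubleDual ℝ X))
    (Ψ : Y × X → EReal) (hbot : ∀ p, Ψ p ≠ ⊥)
    (hproper : ∀ y : Y, ∃ v : X, Ψ (y, v) ≠ ⊤)
    (hconv : ∀ (y : Y) (v w : X) (a b : ℝ), 0 ≤ a → 0 ≤ b → a + b = 1 →
      Ψ (y, a • v + b • w) ≤ (a : EReal) * Ψ (y, v) + (b : EReal) * Ψ (y, w))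
    (hlsc : ∀ y : Y, LowerSemicontinuous fun v : X => Ψ (y, v))
    (G : X → EReal)
    (hGbd : ∃ c : ℝ, ∀ v : X, (c : EReal) ≤ G v)
    (hGsuper : ∀ M : ℝ, ∃ c : ℝ, ∀ v : X, ((M * ‖v‖ - c : ℝ) : EReal) ≤ G v)
    (hGle : ∀ (y : Y) (v : X), G v ≤ Ψ (y, v))
    (hzero : ∃ K : ℝ, ∀ y : Y, Ψ (y, 0) ≤ (K : EReal))
    (husc : UpperSemicontinuous (partialConj Ψ))
    (ζ : Y → StrongDual ℝ X) (hζcont : Continuous ζ) (hζbdd : ∃ M : ℝ, ∀ y, ‖ζ y‖ ≤ M)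
    (μ : Measure Y) (hμ : IsFiniteMeasure μ) :
    eint μ (fun y => partialConj Ψ (y, ζ y)) =
      ⨆ (v : Y → X) (_ : Integrable v μ),
        eint μ (fun y => ((ζ y (v y) : ℝ) : EReal) - Ψ (y, v y)) :=
  integral_partialConj_dual_formula_general hrefl Ψ hbot hproper hconv hlsc G hGbd hGsuper hGle
    hzero husc ζ hζcont hζbdd μ hμ
end

section
/- Let Ψ : Y × X → (-∞,+∞] satisfy: Ψ(y,·) proper convex lsc, Ψ(y,v) ≥ G(v) with G bounded below and superlinear, sup_y Ψ(y,0) < ∞, dom Ψ = Y × D for a fixed D ⊆ X, and y ↦ Ψ(y,v) lower semicontinuous uniformly on sublevels of G (for all y, ε > 0 and C there is a neighborhood U of y with sup_{v ∈ {G≤C}∩D}(Ψ(y,v) - Ψ(ỹ,v)) ≤ ε for all ỹ ∈ U). Then the partial conjugate (y,z) ↦ Ψ*(y,z) is upper semicontinuous on Y × X*. -/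
open MeasureTheory NormedSpace Filter Topology

theorem upperSemicontinuousAt_of_forall_pos_eventually_le_add {α : Type*} [TopologicalSpace α]
    {f : α → EReal} {x : α} (h : ∀ ε : ℝ, 0 < ε → ∀ᶠ x' in 𝓝 x, f x' ≤ f x + ε) :
    UpperSemicontinuousAt f x := by
  intro t ht
  induction hfx : f x using EReal.rec with
  | bot =>
    filter_upwards [h 1 one_pos] with x' hx'
    rw [hfx, EReal.bot_add] at hx'
    exact hx'.trans_lt (hfx ▸ ht)
  | top => simp [hfx] at ht
  | coe a =>
    obtain ⟨r, har, hrt⟩ := EReal.exists_between_coe_real (hfx ▸ ht)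
    have har' : a < r := EReal.coe_lt_coe_iff.1 har
    filter_upwards [h (r - a) (sub_pos.2 har')] with x' hx'
    rw [hfx, ← EReal.coe_add, add_sub_cancel] at hx'
    exact hx'.trans_lt hrt

theorem EReal.coe_sub_le_coe_sub_add {x x' e e' : ℝ} {b b' : EReal} (hx : x ≤ x' + e)
    (hb : b' ≤ b + e') : (x : EReal) - b ≤ (x' : EReal) - b' + ((e + e' : ℝ) : EReal) := by
  induction b using EReal.rec <;> induction b' using EReal.rec <;>
    simp_all [← EReal.coe_add, ← EReal.coe_sub]
  linarith

section PartialConjugate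

variable {Y X : Type*} [NormedAddCommGroup X] [NormedSpace ℝ X] {Ψ : Y × X → EReal}
  {G : X → EReal}

theorem coe_sub_le_neg_of_superlinear_lt {f : X → EReal} {R c K : ℝ} (hGf : ∀ v, G v ≤ f v)
    (hc : ∀ v, ((2 * R * ‖v‖ - c : ℝ) : EReal) ≤ G v) {z : StrongDual ℝ X} (hz : ‖z‖ ≤ R)
    {v : X} (hv : ((c + 2 * K : ℝ) : EReal) < G v) :
    (z v : EReal) - f v ≤ ((-K : ℝ) : EReal) := by
  have hzv : z v ≤ R * ‖v‖ :=
    (le_abs_self _).trans <| (z.le_opNorm v).trans (mul_le_mul_of_nonneg_right hz (norm_nonneg v))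
  have hlow : ((2 * R * ‖v‖ - c : ℝ) : EReal) ≤ f v := (hc v).trans (hGf v)
  have hbig : ((c + 2 * K : ℝ) : EReal) < f v := hv.trans_le (hGf v)
  generalize f v = a at hlow hbig ⊢
  induction a using EReal.rec with
  | bot => simp at hbig
  | top => simp
  | coe a =>
    rw [← EReal.coe_sub, EReal.coe_le_coe_iff]
    rw [EReal.coe_le_coe_iff] at hlow
    rw [EReal.coe_lt_coe_iff] at hbig
    linarith

/-- Outside the sublevel set, `Ψ(y, v) ≥ max(2R‖v‖ - c, c + 2K)` makes the term at most
`-K ≤ ⟨z, 0⟩ - Ψ(y, 0)`, and `0` lies in the sublevel set. -/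
theorem partialConj_eq_biSup_sublevel {y : Y} {z : StrongDual ℝ X} {R c K : ℝ}
    (hGle : ∀ v, G v ≤ Ψ (y, v)) (hc : ∀ v, ((2 * R * ‖v‖ - c : ℝ) : EReal) ≤ G v)
    (hK : Ψ (y, 0) ≤ K) (hz : ‖z‖ ≤ R) :
    partialConj Ψ (y, z) =
      ⨆ v ∈ {v | G v ≤ ((c + 2 * K : ℝ) : EReal)}, (z v : EReal) - Ψ (y, v) := by
  refine le_antisymm (iSup_le fun v => ?_)
    (iSup₂_le fun v _ => le_iSup (fun v => (z v : EReal) - Ψ (y, v)) v)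
  by_cases hv : G v ≤ ((c + 2 * K : ℝ) : EReal)
  · exact le_iSup₂_of_le (f := fun v _ => (z v : EReal) - Ψ (y, v)) v hv le_rfl
  · have hcK : -c ≤ K := by
      simpa [← EReal.coe_neg] using ((hc 0).trans (hGle 0)).trans hK
    have h0 : (0 : X) ∈ {v | G v ≤ ((c + 2 * K : ℝ) : EReal)} :=
      ((hGle 0).trans hK).trans (EReal.coe_le_coe_iff.2 (by linarith))
    calc (z v : EReal) - Ψ (y, v) ≤ ((-K : ℝ) : EReal) :=
          coe_sub_le_neg_of_superlinear_lt hGle hc hz (not_le.1 hv)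
      _ ≤ (z 0 : EReal) - Ψ (y, 0) := by
          rw [map_zero, EReal.coe_zero, zero_sub, EReal.coe_neg, EReal.neg_le_neg_iff]
          exact hK
      _ ≤ _ := le_iSup₂_of_le (f := fun v _ => (z v : EReal) - Ψ (y, v)) 0 h0 le_rfl

theorem biSup_coe_sub_le_partialConj_add {y₀ y : Y} {z₀ z : StrongDual ℝ X} {S : Set X}
    {B ε : ℝ} (hS : ∀ v ∈ S, ‖v‖ ≤ B) (hΨ : ∀ v ∈ S, Ψ (y, v) ≠ ⊤ → Ψ (y₀, v) ≤ Ψ (y, v) + ε) :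
    ⨆ v ∈ S, (z v : EReal) - Ψ (y, v) ≤ partialConj Ψ (y₀, z₀) + ((‖z - z₀‖ * B + ε : ℝ)) := by
  refine iSup₂_le fun v hv => ?_
  by_cases htop : Ψ (y, v) = ⊤
  · simp [htop]
  have hzv : z v ≤ z₀ v + ‖z - z₀‖ * B := by
    have := (le_abs_self _).trans <| ((z - z₀).le_opNorm v).trans
      (mul_le_mul_of_nonneg_left (hS v hv) (norm_nonneg _))
    rw [sub_apply] at this
    linarith
  exact (EReal.coe_sub_le_coe_sub_add hzv (hΨ v hv htop)).trans
    (add_le_add_left (le_iSup (fun v => (z₀ v : EReal) - Ψ (y₀, v)) v) _)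

end PartialConjugate

theorem partialConj_upperSemicontinuous_general
    {Y : Type*} [TopologicalSpace Y]
    {X : Type*} [NormedAddCommGroup X] [NormedSpace ℝ X]
    (Ψ : Y × X → EReal)
    (G : X → EReal)
    (hGsuper : ∀ M : ℝ, ∃ c : ℝ, ∀ v : X, ((M * ‖v‖ - c : ℝ) : EReal) ≤ G v)
    (hGle : ∀ (y : Y) (v : X), G v ≤ Ψ (y, v))
    (hzero : ∃ K : ℝ, ∀ y : Y, Ψ (y, 0) ≤ (K : EReal))
    -- `dom Ψ = Y × D` for a fixed `D ⊆ X`: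
    (D : Set X) (hdom : ∀ (y : Y) (v : X), Ψ (y, v) ≠ ⊤ ↔ v ∈ D)
    -- `y ↦ Ψ(y,v)` is lower semicontinuous, uniformly on sublevels of `G`:
    (hunif : ∀ (y : Y) (ε : ℝ), 0 < ε → ∀ C : ℝ, ∃ U ∈ nhds y, ∀ y' ∈ U,
      ∀ v ∈ {v : X | G v ≤ (C : EReal)} ∩ D, Ψ (y, v) ≤ Ψ (y', v) + (ε : EReal)) :
    UpperSemicontinuous (partialConj Ψ) := by
  obtain ⟨K, hK⟩ := hzero
  obtain ⟨c₁, hc₁⟩ := hGsuper 1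
  rintro ⟨y₀, z₀⟩
  refine upperSemicontinuousAt_of_forall_pos_eventually_le_add fun η hη => ?_
  obtain ⟨c, hc⟩ := hGsuper (2 * (‖z₀‖ + 1))
  set C : ℝ := c + 2 * K
  have hbdd : ∀ v ∈ {v | G v ≤ (C : EReal)}, ‖v‖ ≤ C + c₁ := fun v hv => by
    have := (hc₁ v).trans hv
    rw [EReal.coe_le_coe_iff] at this
    linarith
  obtain ⟨U, hU, hUΨ⟩ := hunif y₀ (η / 2) (half_pos hη) C
  have hz : ∀ᶠ z in 𝓝 z₀, ‖z‖ < ‖z₀‖ + 1 ∧ ‖z - z₀‖ * (C + c₁) < η / 2 := by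
    refine ((continuous_norm.tendsto z₀).eventually_lt_const (lt_add_one _)).and
      ((Continuous.tendsto (by fun_prop) z₀).eventually_lt_const ?_)
    simpa using half_pos hη
  filter_upwards [prod_mem_nhds hU hz] with ⟨y, z⟩ ⟨hy, hzR, hzδ⟩
  rw [partialConj_eq_biSup_sublevel (hGle y) hc (hK y) hzR.le]
  refine (biSup_coe_sub_le_partialConj_add (z₀ := z₀) hbdd
    fun v hv hfin => hUΨ y hy v ⟨hv, (hdom y v).1 hfin⟩).trans ?_
  gcongr
  linarith

/-- If `Ψ(y,·)` is proper convex lsc, bounded below by a superlinear `G`, `sup_y Ψ(y,0) < ∞`,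
the domain of `Ψ` has the product form `Y × D`, and `y ↦ Ψ(y,v)` is lower semicontinuous
uniformly on the sublevels of `G`, then the partial conjugate `(y,z) ↦ Ψ*(y,z)` is upper
semicontinuous on `Y × X*`. -/
theorem partialConj_upperSemicontinuous
    {Y : Type*} [TopologicalSpace Y] [PolishSpace Y]
    {X : Type*} [NormedAddCommGroup X] [NormedSpace ℝ X] [CompleteSpace X]
    [TopologicalSpace.SeparableSpace X]
    (hrefl : Function.Surjective (NormedSpace.inclusionInDoubleDual ℝ X))
    (Ψ : Y × X → EReal) (hbot : ∀ p, Ψ p ≠ ⊥)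
    (hproper : ∀ y : Y, ∃ v : X, Ψ (y, v) ≠ ⊤)
    (hconv : ∀ (y : Y) (v w : X) (a b : ℝ), 0 ≤ a → 0 ≤ b → a + b = 1 →
      Ψ (y, a • v + b • w) ≤ (a : EReal) * Ψ (y, v) + (b : EReal) * Ψ (y, w))
    (hlsc : ∀ y : Y, LowerSemicontinuous fun v : X => Ψ (y, v))
    (G : X → EReal)
    (hGbd : ∃ c : ℝ, ∀ v : X, (c : EReal) ≤ G v)
    (hGsuper : ∀ M : ℝ, ∃ c : ℝ, ∀ v : X, ((M * ‖v‖ - c : ℝ) : EReal) ≤ G v)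
    (hGle : ∀ (y : Y) (v : X), G v ≤ Ψ (y, v))
    (hzero : ∃ K : ℝ, ∀ y : Y, Ψ (y, 0) ≤ (K : EReal))
    -- `dom Ψ = Y × D` for a fixed `D ⊆ X`:
    (D : Set X) (hdom : ∀ (y : Y) (v : X), Ψ (y, v) ≠ ⊤ ↔ v ∈ D)
    -- `y ↦ Ψ(y,v)` is lower semicontinuous, uniformly on sublevels of `G`:
    (hunif : ∀ (y : Y) (ε : ℝ), 0 < ε → ∀ C : ℝ, ∃ U ∈ nhds y, ∀ y' ∈ U,
      ∀ v ∈ {v : X | G v ≤ (C : EReal)} ∩ D, Ψ (y, v) ≤ Ψ (y', v) + (ε : EReal)) :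
    UpperSemicontinuous (partialConj Ψ) :=
  partialConj_upperSemicontinuous_general Ψ G hGsuper hGle hzero D hdom hunif
end

section
/- Let X = ℝⁿ, let ψ : ℝⁿ → ℝ be convex with Fenchel conjugate ψ*, and let φ : ℝⁿ → ℝ be a C¹ coercive function with |Dφ(x)| → ∞ as |x| → ∞. Suppose ξ : [0,T] × ℝⁿ → ℝ is C¹, bounded, and satisfies strictly, for all (t,x): -∂_t ξ(t,x) + ψ*(-D_x ξ(t,x)) < ψ*(-Dφ(x)) and ξ(T,x) < φ(x). Then ξ(t,x) < φ(x) for all (t,x) ∈ [0,T] × ℝⁿ. -/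
open Filter Topology Set
open scoped RealInnerProductSpace

/-!
If `ξ ≥ φ` somewhere, boundedness of `ξ` and coercivity of `φ` make the contact set
`{(t, x) | t ∈ [0, T], φ x ≤ ξ (t, x)}` compact, so it has a point `(t̄, x̄)` of latest time,
and `t̄ < T` by the terminal bound. Since `ξ < φ` at all later times, `ξ (t̄, ·) ≤ φ` touches `φ`
at `x̄`, whence `D_x ξ (t̄, x̄) = Dφ x̄` and `∂_t ξ (t̄, x̄) ≤ 0`. The strict Hamilton–Jacobi
inequality at `(t̄, x̄)` then reads `-∂_t ξ + ψ*(-Dφ x̄) < ψ*(-Dφ x̄)`, which is impossible.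
-/

theorem isCompact_setOf_fst_mem_le_of_tendsto_cocompact {X E : Type*} [TopologicalSpace X]
    [T2Space X] [TopologicalSpace E] {S : Set X} (hS : IsCompact S) {φ : E → ℝ}
    (hφ : Continuous φ) (hφcoer : Tendsto φ (cocompact E) atTop) {ξ : X × E → ℝ}
    (hξ : ContinuousOn ξ (Prod.fst ⁻¹' S)) {M : ℝ} (hM : ∀ p : X × E, p.1 ∈ S → ξ p ≤ M) :
    IsCompact {p : X × E | p.1 ∈ S ∧ φ p.2 ≤ ξ p} := by
  have hclosed : IsClosed {p : X × E | p.1 ∈ S ∧ φ p.2 ≤ ξ p} :=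
    (hS.isClosed.preimage continuous_fst).isClosed_le (hφ.comp continuous_snd).continuousOn hξ
  obtain ⟨C, hC, hφC⟩ := hasBasis_cocompact.eventually_iff.mp (hφcoer.eventually_gt_atTop M)
  refine (hS.prod hC).of_isClosed_subset hclosed fun p ⟨hpS, hp⟩ => ⟨hpS, ?_⟩
  by_contra hpC
  exact (hφC hpC).not_ge (hp.trans (hM p hpS))

theorem HasDerivWithinAt.nonpos_of_le_right {f : ℝ → ℝ} {f' a b : ℝ} (hab : a < b)
    (hf : HasDerivWithinAt f f' (Ioi a) a) (hle : ∀ t ∈ Ioo a b, f t ≤ f a) : f' ≤ 0 := by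
  refine le_of_tendsto ((hasDerivWithinAt_iff_tendsto_slope' (notMem_Ioi.2 le_rfl)).1 hf) ?_
  filter_upwards [Ioo_mem_nhdsGT hab] with t ht
  rw [slope_def_field]
  exact div_nonpos_of_nonpos_of_nonneg (sub_nonpos.2 (hle t ht)) (sub_nonneg.2 ht.1.le)

section Gradient

variable {F : Type*} [NormedAddCommGroup F] [InnerProductSpace ℝ F] [CompleteSpace F]

theorem IsLocalMax.hasGradientAt_eq_of_sub {u v : F → ℝ} {g g' x : F}
    (h : IsLocalMax (fun y => u y - v y) x) (hu : HasGradientAt u g x)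
    (hv : HasGradientAt v g' x) : g = g' :=
  (InnerProductSpace.toDual ℝ F).injective <|
    sub_eq_zero.1 (h.hasFDerivAt_eq_zero (hu.hasFDerivAt.sub hv.hasFDerivAt))

variable {f : ℝ × F → ℝ} {a t : ℝ} {g x : F}

theorem HasFDerivAt.hasDerivAt_comp_prodMk_left
    (hf : HasFDerivAt f (a • ContinuousLinearMap.fst ℝ ℝ F +
      (InnerProductSpace.toDual ℝ F g : F →L[ℝ] ℝ).comp (ContinuousLinearMap.snd ℝ ℝ F)) (t, x)) :
    HasDerivAt (fun s => f (s, x)) a t :=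
  (hf.comp t (hasFDerivAt_prodMk_left t x)).hasDerivAt.congr_deriv (by simp)

theorem HasFDerivAt.hasGradientAt_comp_prodMk_right
    (hf : HasFDerivAt f (a • ContinuousLinearMap.fst ℝ ℝ F +
      (InnerProductSpace.toDual ℝ F g : F →L[ℝ] ℝ).comp (ContinuousLinearMap.snd ℝ ℝ F)) (t, x)) :
    HasGradientAt (fun y => f (t, y)) g x :=
  (hf.comp x (hasFDerivAt_prodMk_right t x)).congr_fderiv (by ext; simp)

end Gradient

namespace Stmt16

variable {n : ℕ}

/-- The Fenchel conjugate of `ψ : ℝⁿ → ℝ`, with values in `(-∞,+∞]` (as `EReal`). -/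
noncomputable def conj (ψ : EuclideanSpace ℝ (Fin n) → ℝ) (p : EuclideanSpace ℝ (Fin n)) :
    EReal :=
  ⨆ v : EuclideanSpace ℝ (Fin n), ((⟪p, v⟫ : ℝ) : EReal) - ((ψ v : ℝ) : EReal)

theorem backward_boundedness_strict_general
    (T : ℝ)
    (ψ : EuclideanSpace ℝ (Fin n) → ℝ)
    (φ : EuclideanSpace ℝ (Fin n) → ℝ) (φ' : EuclideanSpace ℝ (Fin n) → EuclideanSpace ℝ (Fin n))
    (hφ : ∀ x, HasGradientAt φ (φ' x) x)
    (hφcoer : Tendsto φ (cocompact (EuclideanSpace ℝ (Fin n))) atTop)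
    (ξ : ℝ × EuclideanSpace ℝ (Fin n) → ℝ)
    (ξt : ℝ × EuclideanSpace ℝ (Fin n) → ℝ)
    (ξx : ℝ × EuclideanSpace ℝ (Fin n) → EuclideanSpace ℝ (Fin n))
    (hξ : ∀ p : ℝ × EuclideanSpace ℝ (Fin n), p.1 ∈ Icc 0 T →
      HasFDerivAt ξ
        ((ξt p) • ContinuousLinearMap.fst ℝ ℝ (EuclideanSpace ℝ (Fin n)) +
          (InnerProductSpace.toDual ℝ (EuclideanSpace ℝ (Fin n)) (ξx p) :
              EuclideanSpace ℝ (Fin n) →L[ℝ] ℝ).comp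
            (ContinuousLinearMap.snd ℝ ℝ (EuclideanSpace ℝ (Fin n)))) p)
    (hξbdd : ∃ M : ℝ, ∀ p, |ξ p| ≤ M)
    -- strict Hamilton–Jacobi inequality:
    (hHJ : ∀ t ∈ Icc (0 : ℝ) T, ∀ x,
      (((-(ξt (t, x))) : ℝ) : EReal) + conj ψ (-(ξx (t, x))) < conj ψ (-(φ' x)))
    -- strict terminal bound:
    (hterm : ∀ x, ξ (T, x) < φ x) :
    ∀ t ∈ Icc (0 : ℝ) T, ∀ x, ξ (t, x) < φ x := by
  intro t ht x
  by_contra! hx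
  obtain ⟨M, hM⟩ := hξbdd
  have hφc : Continuous φ :=
    continuous_iff_continuousAt.2 fun y => (hφ y).differentiableAt.continuousAt
  obtain ⟨⟨tb, xb⟩, ⟨htb, hcontact⟩, hlast⟩ :=
    (isCompact_setOf_fst_mem_le_of_tendsto_cocompact isCompact_Icc hφc hφcoer
      (fun p hp => (hξ p hp).continuousAt.continuousWithinAt)
      (fun p _ => (le_abs_self _).trans (hM p))).exists_isMaxOn
      ⟨(t, x), ht, hx⟩ continuous_fst.continuousOn
  have htbT : tb < T := htb.2.lt_of_ne (by rintro rfl; exact (hterm xb).not_ge hcontact)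
  have hbelow : ∀ s ∈ Ioo tb T, ∀ y, ξ (s, y) < φ y := fun s hs y =>
    lt_of_not_ge fun h =>
      hs.1.not_ge (isMaxOn_iff.1 hlast (s, y) ⟨⟨htb.1.trans hs.1.le, hs.2.le⟩, h⟩)
  have hle : ∀ y, ξ (tb, y) ≤ φ y := fun y =>
    le_of_tendsto
      ((hξ (tb, y) htb).hasDerivAt_comp_prodMk_left.continuousAt.tendsto.mono_left
        nhdsWithin_le_nhds)
      (by filter_upwards [Ioo_mem_nhdsGT htbT] with s hs using (hbelow s hs y).le)
  have hgrad : ξx (tb, xb) = φ' xb :=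
    IsLocalMax.hasGradientAt_eq_of_sub (.of_forall fun y => (sub_nonpos.2 (hle y)).trans
      (sub_nonneg.2 hcontact)) (hξ _ htb).hasGradientAt_comp_prodMk_right (hφ xb)
  have htime : ξt (tb, xb) ≤ 0 :=
    (hξ _ htb).hasDerivAt_comp_prodMk_left.hasDerivWithinAt.nonpos_of_le_right htbT
      fun s hs => (hbelow s hs xb).le.trans hcontact
  have hHJb := hHJ tb htb xb
  rw [hgrad] at hHJb
  exact hHJb.not_ge (le_add_of_nonneg_left (EReal.coe_nonneg.2 (neg_nonneg.2 htime)))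

/-- Backward boundedness (comparison) for the strict Hamilton–Jacobi inequality in `ℝⁿ`:
if `ψ` is convex, `φ` is `C¹`, coercive and with `|Dφ| → ∞`, and the bounded `C¹` function `ξ`
satisfies strictly `-∂_t ξ + ψ*(-D_x ξ) < ψ*(-Dφ)` on `[0,T] × ℝⁿ` together with the terminal
bound `ξ(T,·) < φ`, then `ξ(t,x) < φ(x)` on all of `[0,T] × ℝⁿ`. -/
theorem backward_boundedness_strict
    (T : ℝ)
    (ψ : EuclideanSpace ℝ (Fin n) → ℝ) (hψ : ConvexOn ℝ Set.univ ψ)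
    (φ : EuclideanSpace ℝ (Fin n) → ℝ) (φ' : EuclideanSpace ℝ (Fin n) → EuclideanSpace ℝ (Fin n))
    (hφ : ∀ x, HasGradientAt φ (φ' x) x) (hφ' : Continuous φ')
    (hφcoer : Tendsto φ (cocompact (EuclideanSpace ℝ (Fin n))) atTop)
    (hφ'coer : Tendsto (fun x => ‖φ' x‖) (cocompact (EuclideanSpace ℝ (Fin n))) atTop)
    (ξ : ℝ × EuclideanSpace ℝ (Fin n) → ℝ)
    (ξt : ℝ × EuclideanSpace ℝ (Fin n) → ℝ)
    (ξx : ℝ × EuclideanSpace ℝ (Fin n) → EuclideanSpace ℝ (Fin n))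
    (hξ : ∀ p : ℝ × EuclideanSpace ℝ (Fin n), p.1 ∈ Icc 0 T →
      HasFDerivAt ξ
        ((ξt p) • ContinuousLinearMap.fst ℝ ℝ (EuclideanSpace ℝ (Fin n)) +
          (InnerProductSpace.toDual ℝ (EuclideanSpace ℝ (Fin n)) (ξx p) :
              EuclideanSpace ℝ (Fin n) →L[ℝ] ℝ).comp
            (ContinuousLinearMap.snd ℝ ℝ (EuclideanSpace ℝ (Fin n)))) p)
    (hξtc : Continuous ξt) (hξxc : Continuous ξx)
    (hξbdd : ∃ M : ℝ, ∀ p, |ξ p| ≤ M)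
    -- strict Hamilton–Jacobi inequality:
    (hHJ : ∀ t ∈ Icc (0 : ℝ) T, ∀ x,
      (((-(ξt (t, x))) : ℝ) : EReal) + conj ψ (-(ξx (t, x))) < conj ψ (-(φ' x)))
    -- strict terminal bound:
    (hterm : ∀ x, ξ (T, x) < φ x) :
    ∀ t ∈ Icc (0 : ℝ) T, ∀ x, ξ (t, x) < φ x :=
  backward_boundedness_strict_general T ψ φ φ' hφ hφcoer ξ ξt ξx hξ hξbdd hHJ hterm

end Stmt16
end
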